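/- arXiv:1709.07504 — 12 statements merged into one kernel-verified Lean document; each statement's English description precedes it below -/
import Mathlib

section
/- Let I be a nonempty finite set and let z : Finset I → ℝ be a submodular function with z(∅) = 0. Then the base polytope P(z) is nonempty, and every defining inequality is optimal: for every subset A ⊆ I there exists a point x ∈ P(z) with ∑_{i ∈ A} x(i) = z(A); in particular the maximum of x ↦ ∑_{i ∈ A} x(i) over P(z) equals z(A). -/
/-!
Greedy algorithm (Edmonds). Order `I` by an injective rank `r` and give each `i` the marginal
value `z {j | r j ≤ r i} - z {j | r j < r i}`. These marginals telescope to `z B` along every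
initial segment `B` of the order, and submodularity (applied to `B` and the segment strictly
below its top element) shows that their sum over an arbitrary `B` is at most `z B`. Choosing an
order in which `A` comes first makes the inequality for `A` tight.
-/

open Finset

/-- A function `z` on subsets of `I` with `z ∅ = 0` is *submodular* if
`z (A ∪ B) + z (A ∩ B) ≤ z A + z B` for all `A, B`. -/
def Submodular {I : Type*} [DecidableEq I] (z : Finset I → ℝ) : Prop :=
  z ∅ = 0 ∧ ∀ A B : Finset I, z (A ∪ B) + z (A ∩ B) ≤ z A + z B

/-- The base polytope of a Boolean function `z`. -/
def basePolytope {I : Type*} [Fintype I] [DecidableEq I] (z : Finset I → ℝ) : Set (I → ℝ) :=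
  {x | (∑ i, x i) = z Finset.univ ∧ ∀ A : Finset I, (∑ i ∈ A, x i) ≤ z A}

section Greedy

variable {I α : Type*} [Fintype I] [LinearOrder α]

theorem subset_filter_lt_of_forall_le {r : I → α} (hr : Function.Injective r) {a : I} {s : Finset I}
    (ha : a ∉ s) (hmax : ∀ j ∈ s, r j ≤ r a) : s ⊆ univ.filter (r · < r a) := fun j hj =>
  mem_filter.2 ⟨mem_univ j, (hmax j hj).lt_of_ne (hr.ne (ne_of_mem_of_not_mem hj ha))⟩

variable [DecidableEq I]

def greedyVector (z : Finset I → ℝ) (r : I → α) (i : I) : ℝ :=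
  z (univ.filter (r · ≤ r i)) - z (univ.filter (r · < r i))

theorem insert_filter_lt_eq_filter_le {r : I → α} (hr : Function.Injective r) (a : I) :
    insert a (univ.filter (r · < r a)) = univ.filter (r · ≤ r a) := by
  ext j
  simp only [mem_insert, mem_filter, mem_univ, true_and, le_iff_lt_or_eq, hr.eq_iff, or_comm]

theorem greedyVector_sum_le {z : Finset I → ℝ} (hz : Submodular z) {r : I → α}
    (hr : Function.Injective r) (B : Finset I) :
    ∑ i ∈ B, greedyVector z r i ≤ z B := by
  induction B using Finset.induction_on_max_value r with
  | empty => simp [hz.1]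
  | insert a s ha hmax ih =>
    have hs := subset_filter_lt_of_forall_le hr ha hmax
    have hunion : insert a s ∪ univ.filter (r · < r a) = univ.filter (r · ≤ r a) := by
      rw [insert_union, union_eq_right.2 hs, insert_filter_lt_eq_filter_le hr]
    have hinter : insert a s ∩ univ.filter (r · < r a) = s := by
      rw [insert_inter_of_notMem (by simp), inter_eq_left.2 hs]
    have hsub := hz.2 (insert a s) (univ.filter (r · < r a))
    rw [hunion, hinter] at hsub
    rw [sum_insert ha]
    unfold greedyVector at ih ⊢
    linarith

theorem greedyVector_sum_eq {z : Finset I → ℝ} (h0 : z ∅ = 0) {r : I → α}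
    (hr : Function.Injective r) {B : Finset I} (hB : ∀ i ∈ B, ∀ j, r j < r i → j ∈ B) :
    ∑ i ∈ B, greedyVector z r i = z B := by
  induction B using Finset.induction_on_max_value r with
  | empty => simp [h0]
  | insert a s ha hmax ih =>
    have hs : s = univ.filter (r · < r a) := by
      refine (subset_filter_lt_of_forall_le hr ha hmax).antisymm fun j hj => ?_
      have hja := (mem_filter.1 hj).2
      exact (mem_insert.1 (hB a (mem_insert_self a s) j hja)).resolve_left (ne_of_lt hja ∘ congrArg r)
    have hs_lower : ∀ i ∈ s, ∀ j, r j < r i → j ∈ s := by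
      rw [hs]
      intro i hi j hj
      simp only [mem_filter, mem_univ, true_and] at hi ⊢
      exact hj.trans hi
    rw [sum_insert ha, ih hs_lower, greedyVector, hs, insert_filter_lt_eq_filter_le hr]
    ring

theorem greedyVector_mem_basePolytope {z : Finset I → ℝ} (hz : Submodular z) {r : I → α}
    (hr : Function.Injective r) : greedyVector z r ∈ basePolytope z :=
  ⟨greedyVector_sum_eq hz.1 hr fun _ _ _ _ => mem_univ _, greedyVector_sum_le hz hr⟩

theorem exists_mem_basePolytope_sum_eq {z : Finset I → ℝ} (hz : Submodular z) (A : Finset I) :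
    ∃ x ∈ basePolytope z, ∑ i ∈ A, x i = z A := by
  let r : I → Bool ×ₗ Fin (Fintype.card I) := fun i => toLex (decide (i ∉ A), Fintype.equivFin I i)
  have hr : Function.Injective r := fun i j h =>
    (Fintype.equivFin I).injective (Prod.ext_iff.1 (toLex.injective h)).2
  have hA : ∀ i ∈ A, ∀ j, r j < r i → j ∈ A := by
    intro i hi j hj
    simp only [r, hi, Prod.Lex.toLex_lt_toLex] at hj
    rcases hj with hbot | ⟨hjA, -⟩
    exacts [absurd hbot not_lt_bot, by simpa using hjA]
  exact ⟨_, greedyVector_mem_basePolytope hz hr, greedyVector_sum_eq hz.1 hr hA⟩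

end Greedy

theorem stmt0_general {I : Type*} [Fintype I] [DecidableEq I]
    (z : Finset I → ℝ) (hz : Submodular z) :
    (basePolytope z).Nonempty ∧
      ∀ A : Finset I,
        (∃ x ∈ basePolytope z, (∑ i ∈ A, x i) = z A) ∧
        IsGreatest ((fun x : I → ℝ => ∑ i ∈ A, x i) '' basePolytope z) (z A) := by
  have tight := exists_mem_basePolytope_sum_eq hz
  refine ⟨(tight ∅).imp fun _ hx => hx.1, fun A => ⟨tight A, ?_⟩⟩
  obtain ⟨x, hx, hxA⟩ := tight A
  refine ⟨⟨x, hx, hxA⟩, ?_⟩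
  rintro _ ⟨y, hy, rfl⟩
  exact hy.2 A

theorem stmt0 {I : Type*} [Fintype I] [DecidableEq I] [Nonempty I]
    (z : Finset I → ℝ) (hz : Submodular z) :
    (basePolytope z).Nonempty ∧
      ∀ A : Finset I,
        (∃ x ∈ basePolytope z, (∑ i ∈ A, x i) = z A) ∧
        IsGreatest ((fun x : I → ℝ => ∑ i ∈ A, x i) '' basePolytope z) (z A) :=
  stmt0_general z hz
end

section
/- Let I be a finite set, z : Finset I → ℝ a submodular function with z(∅) = 0, and I = S ⊔ T a partition of I into two disjoint subsets. Define z|_S : Finset S → ℝ by z|_S(A) = z(A) for A ⊆ S, and z/_S : Finset T → ℝ by z/_S(B) = z(B ∪ S) − z(S) for B ⊆ T. Then a point x : I → ℝ lies in P(z) and satisfies ∑_{s ∈ S} x(s) = z(S) if and only if the restriction of x to S lies in the base polytope P(z|_S) and the restriction of x to T lies in the base polytope P(z/_S). -/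
open Finset

/-!
Write `x(A)` for `∑ i ∈ A, x i`. If `x` lies in `P(z)` and is tight on `S`, then for `B ⊆ T`
`x(B) = x(B ∪ S) - x(S) ≤ z(B ∪ S) - z(S)`, which gives both base polytopes of the minors.
Conversely, splitting `A = (A ∩ S) ⊔ (A \ S)` and using both minors,
`x(A) ≤ z(A ∩ S) + z(A ∪ S) - z(S) ≤ z(A)`, the last step being submodularity of `z` at `A, S`.
-/

section

variable {I : Type*} [DecidableEq I]

theorem mem_basePolytope_iff [Fintype I] (z : Finset I → ℝ) (x : I → ℝ) :
    x ∈ basePolytope z ↔ ∑ i, x i = z univ ∧ ∀ A : Finset I, ∑ i ∈ A, x i ≤ z A :=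
  Iff.rfl

theorem mem_basePolytope_subtype_iff (W : Finset I) (w : Finset I → ℝ) (x : I → ℝ) :
    (fun i : ↥W => x i) ∈
        basePolytope (fun A : Finset ↥W => w (A.map (Function.Embedding.subtype (· ∈ W)))) ↔
      ∑ i ∈ W, x i = w W ∧ ∀ A ⊆ W, ∑ i ∈ A, x i ≤ w A := by
  rw [mem_basePolytope_iff, sum_coe_sort W x, univ_eq_attach, attach_map_val]
  refine and_congr_right fun _ => ⟨fun h A hA => ?_, fun h A => ?_⟩
  · have hA' := h (A.subtype (· ∈ W))
    rwa [sum_subtype_of_mem x hA, subtype_map_of_mem hA] at hA'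
  · exact (sum_map A _ x).symm.trans_le
      (h _ fun i hi => map_subtype_subset (t := (W : Set I)) A hi)

theorem sum_le_sub_of_sum_eq {z : Finset I → ℝ} {x : I → ℝ} {S B : Finset I}
    (hle : ∀ A, ∑ i ∈ A, x i ≤ z A) (hS : ∑ i ∈ S, x i = z S) (hBS : Disjoint B S) :
    ∑ i ∈ B, x i ≤ z (B ∪ S) - z S := by
  have := hle (B ∪ S)
  rw [sum_union hBS, hS] at this
  linarith

theorem Submodular.sum_le_of_inter_of_sdiff {z : Finset I → ℝ} (hz : Submodular z)
    {x : I → ℝ} {A S : Finset I} (hAS : ∑ i ∈ A ∩ S, x i ≤ z (A ∩ S))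
    (hAS' : ∑ i ∈ A \ S, x i ≤ z (A \ S ∪ S) - z S) :
    ∑ i ∈ A, x i ≤ z A := by
  rw [sdiff_union_self_eq_union] at hAS'
  rw [← sum_inter_add_sum_sdiff A S]
  linarith [hz.2 A S]

end

theorem stmt1 {I : Type*} [Fintype I] [DecidableEq I]
    (z : Finset I → ℝ) (hz : Submodular z)
    (S T : Finset I) (hST : Disjoint S T) (hUnion : S ∪ T = Finset.univ)
    (x : I → ℝ) :
    (x ∈ basePolytope z ∧ (∑ s ∈ S, x s) = z S) ↔
      ((fun s : ↥S => x s) ∈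
          basePolytope
            (fun A : Finset ↥S => z (A.map (Function.Embedding.subtype fun i => i ∈ S))) ∧
        (fun t : ↥T => x t) ∈
          basePolytope
            (fun B : Finset ↥T =>
              z ((B.map (Function.Embedding.subtype fun i => i ∈ T)) ∪ S) - z S)) := by
  have hsplit : ∑ i, x i = ∑ i ∈ S, x i + ∑ i ∈ T, x i := by rw [← sum_union hST, hUnion]
  rw [mem_basePolytope_iff, mem_basePolytope_subtype_iff,
    mem_basePolytope_subtype_iff T (fun B => z (B ∪ S) - z S), union_comm T S, hUnion]
  constructor
  · rintro ⟨⟨hsum, hle⟩, hS⟩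
    exact ⟨⟨hS, fun A _ => hle A⟩, by linarith,
      fun B hB => sum_le_sub_of_sum_eq hle hS (hST.symm.mono_left hB)⟩
  · rintro ⟨⟨hS, hSle⟩, hT, hTle⟩
    refine ⟨⟨by linarith, fun A => hz.sum_le_of_inter_of_sdiff (hSle _ inter_subset_right)
      (hTle _ ?_)⟩, hS⟩
    rw [sdiff_le_iff, sup_eq_union, hUnion]
    exact subset_univ A
end

section
/- Let g be a simple graph on a finite vertex set I, and let Z_g ⊆ ℝ^I be the graphic zonotope of g, i.e. the Minkowski sum over the edges {i,j} of g of the segments conv{e_i, e_j}. For any linear functional y : I → ℝ, the set of points of Z_g maximizing x ↦ ∑_{i ∈ I} y(i)·x(i) equals the Minkowski sum, over the edges {i,j} of g, of the following sets: conv{e_i, e_j} if y(i) = y(j); the single point {e_i} if y(i) > y(j); and the single point {e_j} if y(j) > y(i). -/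
/-!
The face of a Minkowski sum on which an additive functional is maximal is the Minkowski sum of
the corresponding faces of the summands. Hence the face of `Z_g` is the sum over the edges of the
faces of the segments `[e_i, e_j]`; the functional takes the values `y i` and `y j` at the
endpoints, so such a face is the whole segment when these agree and the larger endpoint otherwise.
-/

open Finset Pointwise

section Maximizers

variable {E β : Type*}

/-- For a linear `f` this is the face `ContinuousLinearMap.toExposed`, without continuity. -/
def maximizers [LE β] (f : E → β) (A : Set E) : Set E :=
  {x ∈ A | ∀ w ∈ A, f w ≤ f x}

theorem maximizers_zero [Zero E] [Preorder β] (f : E → β) : maximizers f 0 = 0 := by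
  ext x
  simp +contextual [maximizers, Set.mem_zero]

variable [AddCommMonoid E] [AddCommMonoid β] [PartialOrder β] [IsOrderedCancelAddMonoid β]

theorem maximizers_add (f : E →+ β) (A B : Set E) :
    maximizers f (A + B) = maximizers f A + maximizers f B := by
  ext x
  constructor
  · rintro ⟨⟨a, ha, b, hb, rfl⟩, hmax⟩
    refine ⟨a, ⟨ha, fun a' ha' => ?_⟩, b, ⟨hb, fun b' hb' => ?_⟩, rfl⟩
    · have := hmax _ (Set.add_mem_add ha' hb)
      simp only [map_add] at this
      exact le_of_add_le_add_right this
    · have := hmax _ (Set.add_mem_add ha hb')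
      simp only [map_add] at this
      exact le_of_add_le_add_left this
  · rintro ⟨a, ⟨ha, hamax⟩, b, ⟨hb, hbmax⟩, rfl⟩
    refine ⟨Set.add_mem_add ha hb, ?_⟩
    rintro _ ⟨a', ha', b', hb', rfl⟩
    simp only [map_add]
    exact add_le_add (hamax a' ha') (hbmax b' hb')

def maximizersAddHom (f : E →+ β) : Set E →+ Set E where
  toFun := maximizers f
  map_zero' := maximizers_zero f
  map_add' := maximizers_add f

theorem maximizers_sum {ι : Type*} (f : E →+ β) (s : Finset ι) (A : ι → Set E) :
    maximizers f (∑ e ∈ s, A e) = ∑ e ∈ s, maximizers f (A e) :=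
  map_sum (maximizersAddHom f) A s

end Maximizers

section Segment

variable {𝕜 E : Type*} [Field 𝕜] [LinearOrder 𝕜] [IsStrictOrderedRing 𝕜]
  [AddCommGroup E] [Module 𝕜 E] (f : E →ₗ[𝕜] 𝕜) {a b : E}

theorem map_mem_segment {x : E} (hx : x ∈ segment 𝕜 a b) : f x ∈ segment 𝕜 (f a) (f b) :=
  (image_segment 𝕜 f.toAffineMap a b).subset (Set.mem_image_of_mem _ hx)

theorem maximizers_segment_of_eq (h : f a = f b) :
    maximizers f (segment 𝕜 a b) = segment 𝕜 a b := by
  refine Set.sep_eq_self_iff_mem_true.2 fun x hx w hw => ?_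
  have hconst : ∀ z ∈ segment 𝕜 a b, f z = f a := fun z hz => by
    simpa [← h, segment_same] using map_mem_segment f hz
  rw [hconst w hw, hconst x hx]

theorem maximizers_segment_of_lt (h : f b < f a) :
    maximizers f (segment 𝕜 a b) = {a} := by
  refine Set.eq_singleton_iff_unique_mem.2 ⟨⟨left_mem_segment 𝕜 a b, fun w hw => ?_⟩, ?_⟩
  · have := map_mem_segment f hw
    rw [segment_symm, segment_eq_Icc h.le] at this
    exact this.2
  · rintro x ⟨hx, hmax⟩
    rw [segment_eq_image'] at hx
    obtain ⟨θ, ⟨hθ0, -⟩, rfl⟩ := hx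
    have hfx : f (a + θ • (b - a)) = f a + θ * (f b - f a) := by simp
    have hθ : θ = 0 := by
      have := hmax a (left_mem_segment 𝕜 a b)
      rw [hfx] at this
      nlinarith
    simp [hθ]

theorem maximizers_segment :
    maximizers f (segment 𝕜 a b) =
      if f a = f b then segment 𝕜 a b else if f b < f a then {a} else {b} := by
  split_ifs with heq hlt
  · exact maximizers_segment_of_eq f heq
  · exact maximizers_segment_of_lt f hlt
  · rw [segment_symm]
    exact maximizers_segment_of_lt f (lt_of_le_of_ne (not_lt.1 hlt) heq)

end Segment

/-- The set of points of `Z_g` (the graphic zonotope, i.e. the Minkowski sum of the segments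
`conv {e_i, e_j}` over the edges `{i,j}` of `g`) maximizing `x ↦ ∑ i, y i * x i` equals the
Minkowski sum over the edges of: the segment if `y i = y j`; the point `e_i` if `y i > y j`;
and the point `e_j` if `y j > y i`. -/
theorem stmt4 {I : Type*} [Fintype I] [DecidableEq I]
    (g : SimpleGraph I) [DecidableRel g.Adj] (y : I → ℝ)
    (Seg F : Sym2 I → Set (I → ℝ))
    (hSeg : ∀ i j : I, Seg s(i, j) = convexHull ℝ {Pi.single i (1 : ℝ), Pi.single j 1})
    (hF : ∀ i j : I,
      F s(i, j) =
        if y i = y j then convexHull ℝ {Pi.single i (1 : ℝ), Pi.single j 1}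
        else if y j < y i then {Pi.single i 1} else {Pi.single j 1}) :
    {x ∈ (∑ e ∈ g.edgeFinset, Seg e) |
        ∀ w ∈ (∑ e ∈ g.edgeFinset, Seg e), (∑ i, y i * w i) ≤ ∑ i, y i * x i} =
      ∑ e ∈ g.edgeFinset, F e := by
  let f : (I → ℝ) →ₗ[ℝ] ℝ := dotProductBilin ℝ ℝ y
  have hf_single (i : I) : f (Pi.single i 1) = y i := by simp [f]
  change maximizers f.toAddMonoidHom (∑ e ∈ g.edgeFinset, Seg e) = _
  rw [maximizers_sum]
  refine Finset.sum_congr rfl fun e _ => ?_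
  induction e using Sym2.ind with
  | _ i j =>
    rw [hSeg, hF, convexHull_pair]
    simpa [hf_single] using maximizers_segment f (a := Pi.single i 1) (b := Pi.single j 1)
end

section
/- Let I be a finite set and let y assign a nonnegative real number y(J) to each nonempty subset J ⊆ I. Define z : Finset I → ℝ by z(A) = ∑_{K : K ∩ A ≠ ∅} y(K). Then z is submodular with z(∅) = 0, and the Minkowski sum ∑_{∅ ≠ J ⊆ I} y(J)•Δ_J equals the base polytope P(z) = {x : I → ℝ | ∑_{i ∈ I} x(i) = z(I) and ∑_{i ∈ A} x(i) ≤ z(A) for all A ⊆ I}. -/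
open Finset Pointwise

/-- The simplex `Δ_J = conv { e_j : j ∈ J }` in `ℝ^I`. -/
def simplexOf {I : Type*} [DecidableEq I] (J : Finset I) : Set (I → ℝ) :=
  convexHull ℝ ((fun j => Pi.single j (1 : ℝ)) '' (J : Set I))

/-!
Submodularity holds term by term, since each `A ↦ [J ∩ A ≠ ∅]` is submodular.

For the polytope, let `L c = ∑_J y(J) · max_{j ∈ J} c j`, the Lovász extension of `z`.
The Minkowski sum `S` is compact and convex with support function `L`, attained at a sum of
vertices. Testing against `c = 𝟙_A` and `c = ±1` shows `S ⊆ P(z)`. Conversely, every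
`x ∈ P(z)` satisfies `c ⬝ᵥ x ≤ L c`, so `x` lies in every supporting half-space of `S`.
This inequality goes by induction on the set of values of `c`: lowering the top value `a`
to the next value `b` changes `c ⬝ᵥ x` by `(a - b) · x(A)` and `L c` by `(a - b) · z(A)`,
where `A = {c > b}`, and for constant `c` both sides agree because `x(I) = z(I)`.
-/

lemma isCompact_finsetSum {ι E : Type*} [AddCommMonoid E] [TopologicalSpace E] [ContinuousAdd E]
    {s : Finset ι} {t : ι → Set E} (h : ∀ i ∈ s, IsCompact (t i)) :
    IsCompact (∑ i ∈ s, t i) :=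
  Finset.sum_induction t IsCompact (fun _ _ => IsCompact.add) isCompact_singleton h

lemma StrongDual.apply_eq_dotProduct {I : Type*} [Fintype I] [DecidableEq I]
    (l : StrongDual ℝ (I → ℝ)) (v : I → ℝ) : l v = (fun i => l (Pi.single i 1)) ⬝ᵥ v := by
  conv_lhs => rw [← Finset.univ_sum_single v]
  rw [map_sum, dotProduct]
  refine sum_congr rfl fun i _ => ?_
  have hsingle : Pi.single i (v i) = v i • Pi.single i (1 : ℝ) := by
    rw [← Pi.single_smul', smul_eq_mul, mul_one]
  rw [hsingle, map_smul, smul_eq_mul, mul_comm]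

lemma dotProduct_le_sup'_of_mem_simplexOf {I : Type*} [DecidableEq I] [Fintype I] {J : Finset I}
    (hJ : J.Nonempty) (c : I → ℝ) {q : I → ℝ} (hq : q ∈ simplexOf J) :
    c ⬝ᵥ q ≤ J.sup' hJ c :=
  convexHull_min (by
      rintro _ ⟨j, hj, rfl⟩
      simpa only [Set.mem_ofPred_eq, dotProduct_single, mul_one] using le_sup' c hj)
    (convex_halfSpace_le ⟨dotProduct_add c, fun r v => dotProduct_smul r c v⟩ _) hq

section

variable {I : Type*} [Fintype I] [DecidableEq I]

def coverage (y : Finset I → ℝ) (A : Finset I) : ℝ :=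
  ∑ K ∈ univ.filter fun K : Finset I => (K ∩ A).Nonempty, y K

def lovaszExt (y : Finset I → ℝ) (c : I → ℝ) : ℝ :=
  ∑ J ∈ univ.filter fun J : Finset I => J.Nonempty,
    y J * if hJ : J.Nonempty then J.sup' hJ c else 0

variable (y : Finset I → ℝ)

lemma coverage_eq_sum_ite (A : Finset I) :
    coverage y A = ∑ J ∈ univ.filter fun J : Finset I => J.Nonempty,
      if (J ∩ A).Nonempty then y J else 0 := by
  rw [coverage, sum_ite, sum_const_zero, add_zero, filter_filter]
  exact sum_congr (filter_congr fun J _ => ⟨fun h => ⟨h.mono inter_subset_left, h⟩, And.right⟩)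
    fun _ _ => rfl

lemma coverage_univ : coverage y univ = ∑ J ∈ univ.filter fun J : Finset I => J.Nonempty, y J := by
  rw [coverage_eq_sum_ite]
  exact sum_congr rfl fun J hJ => by rw [inter_univ, if_pos (mem_filter.1 hJ).2]

lemma coverage_submodular (hy : ∀ J : Finset I, J.Nonempty → 0 ≤ y J) :
    Submodular (coverage y) := by
  refine ⟨by simp [coverage], fun A B => ?_⟩
  simp only [coverage_eq_sum_ite, ← sum_add_distrib]
  refine sum_le_sum fun J hJ => ?_
  have hyJ := hy J (mem_filter.1 hJ).2
  have hunion : (J ∩ (A ∪ B)).Nonempty ↔ (J ∩ A).Nonempty ∨ (J ∩ B).Nonempty := by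
    rw [inter_union_distrib_left, union_nonempty]
  have hinter : (J ∩ (A ∩ B)).Nonempty → (J ∩ A).Nonempty ∧ (J ∩ B).Nonempty := fun h =>
    ⟨h.mono (inter_subset_inter_left inter_subset_left),
      h.mono (inter_subset_inter_left inter_subset_right)⟩
  split_ifs <;> grind

lemma lovaszExt_const (a : ℝ) : lovaszExt y (fun _ => a) = a * coverage y univ := by
  rw [coverage_univ, lovaszExt, mul_sum]
  exact sum_congr rfl fun J hJ => by rw [dif_pos (mem_filter.1 hJ).2, sup'_const, mul_comm]

lemma lovaszExt_indicator (A : Finset I) :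
    lovaszExt y (fun i => if i ∈ A then 1 else 0) = coverage y A := by
  rw [coverage_eq_sum_ite, lovaszExt]
  refine sum_congr rfl fun J hJ => ?_
  have hJ := (mem_filter.1 hJ).2
  rw [dif_pos hJ]
  split_ifs with hA
  · obtain ⟨j, hj⟩ := hA
    rw [mem_inter] at hj
    rw [le_antisymm (sup'_le (a := 1) hJ _ fun i _ => by split_ifs <;> norm_num)
      (le_sup'_of_le _ hj.1 (by rw [if_pos hj.2])), mul_one]
  · have : ∀ j ∈ J, j ∉ A := fun j hj hjA => hA ⟨j, mem_inter.2 ⟨hj, hjA⟩⟩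
    rw [sup'_congr hJ rfl fun j hj => if_neg (this j hj), sup'_const, mul_zero]

lemma mem_basePolytope_of_dotProduct_le {x : I → ℝ} (h : ∀ c, c ⬝ᵥ x ≤ lovaszExt y c) :
    x ∈ basePolytope (coverage y) := by
  have hsum : ∀ a : ℝ, (fun _ => a) ⬝ᵥ x = a * ∑ i, x i := fun a => by
    simp only [dotProduct, mul_sum]
  refine ⟨le_antisymm ?_ ?_, fun A => ?_⟩
  · simpa [hsum, lovaszExt_const] using h fun _ => 1
  · simpa [hsum, lovaszExt_const] using h fun _ => -1
  · simpa [dotProduct, lovaszExt_indicator] using h fun i => if i ∈ A then 1 else 0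

lemma dotProduct_le_lovaszExt_of_min {x c : I → ℝ} (hx : ∀ A, ∑ i ∈ A, x i ≤ coverage y A)
    {a b : ℝ} (hba : b ≤ a)
    (hc : ∀ i, b < c i → c i = a)
    (hmin : (fun i => min (c i) b) ⬝ᵥ x ≤ lovaszExt y fun i => min (c i) b) :
    c ⬝ᵥ x ≤ lovaszExt y c := by
  have eq_min_add_ite : ∀ u, (b < u → u = a) → u = min u b + if b < u then a - b else 0 := by
    intro u hu
    split_ifs with h
    · rw [hu h, min_eq_right hba]; ring
    · rw [min_eq_left (not_lt.1 h), add_zero]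
  set A := univ.filter fun i => b < c i
  have hdot : c ⬝ᵥ x = (fun i => min (c i) b) ⬝ᵥ x + (a - b) * ∑ i ∈ A, x i := by
    simp only [dotProduct, A, mul_sum, sum_filter, ← sum_add_distrib]
    refine sum_congr rfl fun i _ => ?_
    conv_lhs => rw [eq_min_add_ite (c i) (hc i)]
    split_ifs <;> ring
  have hsup : ∀ J (hJ : J.Nonempty), J.sup' hJ c =
      J.sup' hJ (fun i => min (c i) b) + if (J ∩ A).Nonempty then a - b else 0 := by
    intro J hJ
    obtain ⟨j, -, hj⟩ := exists_mem_eq_sup' hJ c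
    have hA : (J ∩ A).Nonempty ↔ b < J.sup' hJ c := by
      simp [lt_sup'_iff, Finset.Nonempty, A]
    have hsup_min : (J.sup' hJ fun i => min (c i) b) = min (J.sup' hJ c) b :=
      (apply_sup'_eq_sup'_comp hJ (fun t => min t b) fun _ _ => inf_sup_right _ _ _).symm
    simp only [hA, hsup_min]
    exact eq_min_add_ite _ (hj ▸ hc j)
  have hlov : lovaszExt y c = lovaszExt y (fun i => min (c i) b) + (a - b) * coverage y A := by
    rw [coverage_eq_sum_ite, lovaszExt, lovaszExt, mul_sum, ← sum_add_distrib]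
    refine sum_congr rfl fun J hJ => ?_
    rw [dif_pos (mem_filter.1 hJ).2, dif_pos (mem_filter.1 hJ).2, hsup]
    split_ifs <;> ring
  rw [hdot, hlov]
  exact add_le_add hmin (mul_le_mul_of_nonneg_left (hx A) (sub_nonneg.2 hba))

lemma dotProduct_le_lovaszExt_of_mem_basePolytope {x : I → ℝ}
    (hx : x ∈ basePolytope (coverage y)) (c : I → ℝ) : c ⬝ᵥ x ≤ lovaszExt y c := by
  have hconst : ∀ a : ℝ, (fun _ => a) ⬝ᵥ x ≤ lovaszExt y fun _ => a := fun a => by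
    rw [lovaszExt_const, ← hx.1, dotProduct, mul_sum]
  suffices ∀ V : Finset ℝ, ∀ c : I → ℝ, (∀ i, c i ∈ V) → c ⬝ᵥ x ≤ lovaszExt y c from
    this _ c fun i => mem_image_of_mem c (mem_univ i)
  intro V
  induction V using Finset.induction_on_max with
  | empty =>
    intro c hc
    obtain rfl : c = fun _ => 0 := funext fun i => absurd (hc i) (notMem_empty _)
    exact hconst 0
  | insert a V hlt ih =>
    intro c hc
    rcases V.eq_empty_or_nonempty with rfl | hV
    · obtain rfl : c = fun _ => a := funext fun i => by simpa using hc i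
      exact hconst a
    have hb := hlt _ (V.max'_mem hV)
    have hc' : ∀ i, c i = a ∨ c i ≤ V.max' hV := fun i =>
      (mem_insert.1 (hc i)).imp_right (V.le_max' _)
    refine dotProduct_le_lovaszExt_of_min y hx.2 hb.le
      (fun i hi => (hc' i).resolve_right hi.not_ge) (ih _ fun i => ?_)
    rcases mem_insert.1 (hc i) with hi | hi
    · rw [hi, min_eq_right hb.le]; exact V.max'_mem hV
    · rwa [min_eq_left (V.le_max' _ hi)]

lemma dotProduct_le_lovaszExt_of_mem_sum (hy : ∀ J : Finset I, J.Nonempty → 0 ≤ y J)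
    {s : I → ℝ} (hs : s ∈ ∑ J ∈ univ.filter fun J : Finset I => J.Nonempty, y J • simplexOf J)
    (c : I → ℝ) : c ⬝ᵥ s ≤ lovaszExt y c := by
  obtain ⟨p, hp, rfl⟩ := (Set.mem_finsetSum _ _ _).1 hs
  rw [dotProduct_sum, lovaszExt]
  refine sum_le_sum fun J hJ => ?_
  have hJ' := (mem_filter.1 hJ).2
  obtain ⟨q, hq, hpq⟩ := hp hJ
  rw [← hpq, dotProduct_smul, smul_eq_mul, dif_pos hJ']
  exact mul_le_mul_of_nonneg_left (dotProduct_le_sup'_of_mem_simplexOf hJ' c hq) (hy J hJ')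

lemma exists_mem_sum_dotProduct_eq_lovaszExt (c : I → ℝ) :
    ∃ s ∈ ∑ J ∈ univ.filter fun J : Finset I => J.Nonempty, y J • simplexOf J,
      c ⬝ᵥ s = lovaszExt y c := by
  have hvertex : ∀ J ∈ univ.filter fun J : Finset I => J.Nonempty, ∃ v ∈ y J • simplexOf J,
      c ⬝ᵥ v = y J * if hJ : J.Nonempty then J.sup' hJ c else 0 := by
    intro J hJ
    have hJ' := (mem_filter.1 hJ).2
    obtain ⟨j, hj, hmax⟩ := exists_mem_eq_sup' hJ' c
    refine ⟨y J • Pi.single j 1, Set.smul_mem_smul_set (subset_convexHull ℝ _ ⟨j, hj, rfl⟩), ?_⟩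
    rw [dotProduct_smul, dotProduct_single, dif_pos hJ', hmax, smul_eq_mul, mul_one]
  choose! v hv hcv using hvertex
  refine ⟨_, Set.finsetSum_mem_finsetSum _ _ _ hv, ?_⟩
  rw [dotProduct_sum, lovaszExt]
  exact sum_congr rfl hcv

theorem sum_smul_simplexOf_eq_basePolytope (hy : ∀ J : Finset I, J.Nonempty → 0 ≤ y J) :
    ∑ J ∈ univ.filter fun J : Finset I => J.Nonempty, y J • simplexOf J =
      basePolytope (coverage y) := by
  set S := ∑ J ∈ univ.filter fun J : Finset I => J.Nonempty, y J • simplexOf J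
  refine Set.Subset.antisymm (fun s hs => mem_basePolytope_of_dotProduct_le y
    (dotProduct_le_lovaszExt_of_mem_sum y hy hs)) fun x hx => ?_
  have hconvex : Convex ℝ S := convex_sum _ fun J _ => (convex_convexHull ℝ _).smul (y J)
  have hcompact : IsCompact S := isCompact_finsetSum fun J _ =>
    ((J.finite_toSet.image _).isCompact_convexHull (𝕜 := ℝ)).smul (y J)
  rw [← iInter_halfSpaces_eq hconvex hcompact.isClosed]
  refine Set.mem_iInter.2 fun l => ?_
  obtain ⟨s, hs, hsl⟩ := exists_mem_sum_dotProduct_eq_lovaszExt y fun i => l (Pi.single i 1)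
  refine ⟨s, hs, ?_⟩
  rw [StrongDual.apply_eq_dotProduct, StrongDual.apply_eq_dotProduct, hsl]
  exact dotProduct_le_lovaszExt_of_mem_basePolytope y hx _

end

theorem stmt5 {I : Type*} [Fintype I] [DecidableEq I]
    (y : Finset I → ℝ) (hy : ∀ J : Finset I, J.Nonempty → 0 ≤ y J) :
    Submodular
      (fun A : Finset I =>
        ∑ K ∈ Finset.univ.filter fun K : Finset I => (K ∩ A).Nonempty, y K) ∧
    (∑ J ∈ Finset.univ.filter fun J : Finset I => J.Nonempty, y J • simplexOf J) =
      basePolytope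
        (fun A : Finset I =>
          ∑ K ∈ Finset.univ.filter fun K : Finset I => (K ∩ A).Nonempty, y K) :=
  ⟨coverage_submodular y hy, sum_smul_simplexOf_eq_basePolytope y hy⟩
end

section
/- Let I be a finite set and let y and y' each assign a nonnegative real number to every nonempty subset of I. If the Minkowski sums ∑_{∅ ≠ J ⊆ I} y(J)•Δ_J and ∑_{∅ ≠ J ⊆ I} y'(J)•Δ_J are equal as subsets of ℝ^I, then y(J) = y'(J) for every nonempty J ⊆ I. -/
open Finset Pointwise

/-!
The minimum of the linear functional `x ↦ ∑ i ∈ T, x i` on `Δ_J` is `1` if `J ⊆ T` and `0`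
otherwise, so on `∑_J y(J) • Δ_J` its minimum is `∑_{J ⊆ T} y(J)`. Equal Minkowski sums therefore
have equal sums `∑_{J ⊆ T} y(J)` for every `T`, and these sums determine `y` by induction on `J`.
-/

theorem Finset.eq_of_sum_filter_subset_eq {α M : Type*} [DecidableEq α] [AddCancelCommMonoid M]
    (s : Finset (Finset α)) {f g : Finset α → M}
    (h : ∀ T, ∑ J ∈ s with J ⊆ T, f J = ∑ J ∈ s with J ⊆ T, g J) :
    ∀ J ∈ s, f J = g J := by
  intro J
  induction J using Finset.strongInduction with
  | H J ih =>
    intro hJ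
    have hsplit : ∀ u : Finset α → M,
        ∑ K ∈ s with K ⊆ J, u K = u J + ∑ K ∈ s with K ⊂ J, u K := by
      intro u
      have hmem : J ∈ {K ∈ s | K ⊆ J} := mem_filter.2 ⟨hJ, subset_rfl⟩
      rw [← add_sum_erase _ _ hmem]
      congr 2
      ext K
      simp only [mem_erase, mem_filter, ssubset_iff_subset_ne]
      tauto
    have hlower : ∑ K ∈ s with K ⊂ J, f K = ∑ K ∈ s with K ⊂ J, g K :=
      sum_congr rfl fun K hK => ih K (mem_filter.1 hK).2 (mem_filter.1 hK).1
    have hJsum := h J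
    rwa [hsplit, hsplit, hlower, add_left_inj] at hJsum

section Simplex

variable {I : Type*} [DecidableEq I]

theorem ite_subset_le_sum_of_mem_simplexOf {J T : Finset I} {a : I → ℝ}
    (ha : a ∈ simplexOf J) : (if J ⊆ T then 1 else 0 : ℝ) ≤ ∑ i ∈ T, a i := by
  refine convexHull_min ?_
    (convex_halfSpace_ge (f := fun z : I → ℝ => ∑ i ∈ T, z i) ⟨fun u v => ?_, fun c u => ?_⟩ _) ha
  · rintro _ ⟨j, hj, rfl⟩
    simp only [Set.mem_ofPred_eq, sum_pi_single']
    split_ifs with hJT hjT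
    · exact le_rfl
    · exact absurd (hJT hj) hjT
    · exact zero_le_one
    · exact le_rfl
  · simp only [Pi.add_apply, sum_add_distrib]
  · simp only [Pi.smul_apply, smul_eq_mul, mul_sum]

theorem sum_filter_subset_le_sum_of_mem_sum_smul_simplexOf {s : Finset (Finset I)}
    {y : Finset I → ℝ} (hy : ∀ J ∈ s, 0 ≤ y J) {x : I → ℝ}
    (hx : x ∈ ∑ J ∈ s, y J • simplexOf J) (T : Finset I) :
    ∑ J ∈ s with J ⊆ T, y J ≤ ∑ i ∈ T, x i := by
  obtain ⟨g, hg, rfl⟩ := (Set.mem_finsetSum _ _ _).1 hx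
  calc ∑ J ∈ s with J ⊆ T, y J
      = ∑ J ∈ s, y J * (if J ⊆ T then 1 else 0) := by
        rw [sum_filter]; simp only [mul_ite, mul_one, mul_zero]
    _ ≤ ∑ J ∈ s, ∑ i ∈ T, g J i := by
        refine sum_le_sum fun J hJ => ?_
        obtain ⟨a, ha, hga⟩ := Set.mem_smul_set.1 (hg hJ)
        rw [← hga]
        simp only [Pi.smul_apply, smul_eq_mul, ← mul_sum]
        exact mul_le_mul_of_nonneg_left (ite_subset_le_sum_of_mem_simplexOf ha) (hy J hJ)
    _ = ∑ i ∈ T, (∑ J ∈ s, g J) i := by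
        simp only [Finset.sum_apply]; exact sum_comm

theorem exists_mem_simplexOf_sum_eq_ite {J : Finset I} (hJ : J.Nonempty) (T : Finset I) :
    ∃ p ∈ simplexOf J, ∑ i ∈ T, p i = if J ⊆ T then 1 else 0 := by
  -- a vertex of `Δ_J` outside `T` whenever there is one
  obtain ⟨j, hj, hjT⟩ : ∃ j ∈ J, (j ∈ T ↔ J ⊆ T) := by
    by_cases hJT : J ⊆ T
    · obtain ⟨j, hj⟩ := hJ
      exact ⟨j, hj, iff_of_true (hJT hj) hJT⟩
    · obtain ⟨j, hj, hjT⟩ := not_subset.1 hJT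
      exact ⟨j, hj, iff_of_false hjT hJT⟩
  refine ⟨Pi.single j 1, subset_convexHull ℝ _ ⟨j, hj, rfl⟩, ?_⟩
  rw [sum_pi_single', if_congr hjT rfl rfl]

theorem exists_mem_sum_smul_simplexOf_sum_eq {s : Finset (Finset I)}
    (hs : ∀ J ∈ s, J.Nonempty) (y : Finset I → ℝ) (T : Finset I) :
    ∃ x ∈ ∑ J ∈ s, y J • simplexOf J, ∑ i ∈ T, x i = ∑ J ∈ s with J ⊆ T, y J := by
  choose! p hp hpT using fun J hJ => exists_mem_simplexOf_sum_eq_ite (hs J hJ) T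
  refine ⟨∑ J ∈ s, y J • p J, ?_, ?_⟩
  · exact Set.finsetSum_mem_finsetSum _ _ _ fun J hJ => Set.smul_mem_smul_set (hp J hJ)
  · simp only [Finset.sum_apply, Pi.smul_apply, smul_eq_mul]
    rw [sum_comm, sum_filter]
    refine sum_congr rfl fun J hJ => ?_
    rw [← mul_sum, hpT J hJ, mul_ite, mul_one, mul_zero]

theorem sum_filter_subset_le_of_sum_smul_simplexOf_subset {s : Finset (Finset I)}
    (hs : ∀ J ∈ s, J.Nonempty) {y y' : Finset I → ℝ} (hy : ∀ J ∈ s, 0 ≤ y J)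
    (h : ∑ J ∈ s, y' J • simplexOf J ⊆ ∑ J ∈ s, y J • simplexOf J) (T : Finset I) :
    ∑ J ∈ s with J ⊆ T, y J ≤ ∑ J ∈ s with J ⊆ T, y' J := by
  obtain ⟨x, hx, hxT⟩ := exists_mem_sum_smul_simplexOf_sum_eq hs y' T
  exact hxT ▸ sum_filter_subset_le_sum_of_mem_sum_smul_simplexOf hy (h hx) T

end Simplex

/-- If two nonnegative Minkowski sums of dilated faces of the standard simplex coincide,
then the dilation coefficients agree on all nonempty subsets. -/
theorem stmt6 {I : Type*} [Fintype I] [DecidableEq I]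
    (y y' : Finset I → ℝ)
    (hy : ∀ J : Finset I, J.Nonempty → 0 ≤ y J)
    (hy' : ∀ J : Finset I, J.Nonempty → 0 ≤ y' J)
    (h : (∑ J ∈ Finset.univ.filter fun J : Finset I => J.Nonempty, y J • simplexOf J) =
      ∑ J ∈ Finset.univ.filter fun J : Finset I => J.Nonempty, y' J • simplexOf J) :
    ∀ J : Finset I, J.Nonempty → y J = y' J := by
  have hs : ∀ J ∈ univ.filter fun J : Finset I => J.Nonempty, J.Nonempty :=
    fun J hJ => (mem_filter.1 hJ).2
  have hsums : ∀ T : Finset I, ∑ J ∈ univ.filter (·.Nonempty) with J ⊆ T, y J =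
      ∑ J ∈ univ.filter (·.Nonempty) with J ⊆ T, y' J := fun T =>
    le_antisymm
      (sum_filter_subset_le_of_sum_smul_simplexOf_subset hs (fun J hJ => hy J (hs J hJ)) h.ge T)
      (sum_filter_subset_le_of_sum_smul_simplexOf_subset hs (fun J hJ => hy' J (hs J hJ)) h.le T)
  exact fun J hJ => eq_of_sum_filter_subset_eq _ hsums J (mem_filter.2 ⟨mem_univ J, hJ⟩)
end

section
/- Let M be a matroid on a finite ground set E with rank function r, where r(A) is the size of a largest independent subset of A. Then the convex hull in ℝ^E of the indicator vectors ∑_{b ∈ B} e_b of the bases B of M equals the set {x : E → ℝ | ∑_{i ∈ E} x(i) = r(E) and ∑_{i ∈ A} x(i) ≤ r(A) for all A ⊆ E}. Moreover, for every basis B of M, the indicator vector ∑_{b ∈ B} e_b is an extreme point of this polytope. -/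
/-!
The polytope `P` cut out by the rank inequalities is convex and contains every base vector, so it
contains their convex hull. Conversely, by Hahn–Banach it suffices that every linear functional
`w` attains its maximum over `P` at a base vector. Take a base `B` of maximum `w`-weight: an
exchange argument shows that `B` meets every superlevel set `{w ≥ t}` in `r({w ≥ t})` elements.
So for `x ∈ P` the vector `x - 1_B` has total sum zero and a nonpositive sum over every superlevel
set of `w`, and summation by parts along these sets gives `w ⬝ x ≤ w(B)`. Finally, base vectors are
`0/1`-vectors, hence extreme points of the cube `[0,1]^E`, which contains their convex hull.
-/

open Finset

/-- The rank of a subset `A`: the size of a largest subset of `A` contained in some basis. -/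
def matRank {E : Type*} [DecidableEq E] (Bs : Finset (Finset E)) (A : Finset E) : ℕ :=
  (A.powerset.filter fun X => ∃ B ∈ Bs, X ⊆ B).sup Finset.card

theorem sum_sub_mul_nonpos_of_superlevel {ι : Type*} [DecidableEq ι] (w d : ι → ℝ)
    (s : Finset ι) (c : ℝ) (hc : ∀ i ∈ s, c ≤ w i)
    (hd : ∀ t > c, ∑ i ∈ s with t ≤ w i, d i ≤ 0) :
    ∑ i ∈ s, (w i - c) * d i ≤ 0 := by
  -- Peel off a minimiser `a` of `w`: the sum splits into `(w a - c)` times the full sum, which is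
  -- a superlevel sum, plus the same kind of sum over `s` with `c` replaced by `w a`.
  induction s using Finset.induction_on_min_value w generalizing c with
  | empty => simp
  | insert a s ha hmin ih =>
    have hsplit : ∑ i ∈ insert a s, (w i - c) * d i =
        (w a - c) * ∑ i ∈ insert a s, d i + ∑ i ∈ s, (w i - w a) * d i := by
      rw [sum_insert ha, sum_insert ha, mul_add, mul_sum, add_assoc, ← sum_add_distrib]
      exact congrArg _ (sum_congr rfl fun i _ ↦ by ring)
    have hca := hc a (mem_insert_self a s)
    have hlow : (w a - c) * ∑ i ∈ insert a s, d i ≤ 0 := by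
      rcases hca.eq_or_lt with rfl | hlt
      · simp
      · refine mul_nonpos_of_nonneg_of_nonpos (by linarith) ?_
        have hall : ∀ i ∈ insert a s, w a ≤ w i := by
          simpa using hmin
        simpa [filter_true_of_mem hall] using hd (w a) hlt
    have hrest : ∑ i ∈ s, (w i - w a) * d i ≤ 0 := by
      refine ih (w a) hmin fun t ht ↦ ?_
      simpa [filter_insert, not_le.mpr ht] using hd t (hca.trans_lt ht)
    linarith

theorem sum_mul_nonpos_of_superlevel {ι : Type*} [DecidableEq ι] (w d : ι → ℝ)
    (s : Finset ι) (h0 : ∑ i ∈ s, d i = 0) (hd : ∀ t, ∑ i ∈ s with t ≤ w i, d i ≤ 0) :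
    ∑ i ∈ s, w i * d i ≤ 0 := by
  obtain ⟨c, hc⟩ := (s.image w).bddBelow
  have := sum_sub_mul_nonpos_of_superlevel w d s c (fun i hi ↦ hc (mem_image_of_mem w hi))
    fun t _ ↦ hd t
  simpa [sub_mul, sum_sub_distrib, ← mul_sum, h0] using this

theorem mem_convexHull_of_forall_exists_le {V : Type*} [TopologicalSpace V] [AddCommGroup V]
    [Module ℝ V] [IsTopologicalAddGroup V] [ContinuousSMul ℝ V] [LocallyConvexSpace ℝ V]
    [T2Space V] {S : Set V} (hS : S.Finite) {x : V}
    (h : ∀ f : StrongDual ℝ V, ∃ y ∈ S, f x ≤ f y) : x ∈ convexHull ℝ S := by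
  by_contra hx
  obtain ⟨f, u, hfx, hfS⟩ :=
    geometric_hahn_banach_point_closed (convex_convexHull ℝ S) (hS.isClosed_convexHull ℝ) hx
  obtain ⟨y, hy, hxy⟩ := h (-f)
  linarith [hfS y (subset_convexHull ℝ S hy), neg_apply f x, neg_apply f y]

section

variable {E : Type*} [DecidableEq E] {Bs : Finset (Finset E)}

def BaseExchange (Bs : Finset (Finset E)) : Prop :=
  ∀ B₁ ∈ Bs, ∀ B₂ ∈ Bs, ∀ a ∈ B₁ \ B₂, ∃ b ∈ B₂ \ B₁, insert b (B₁.erase a) ∈ Bs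

namespace BaseExchange

theorem exchangeProperty (h : BaseExchange Bs) :
    Matroid.ExchangeProperty fun X : Set E ↦ ∃ B ∈ Bs, X = ↑B := by
  rintro _ _ ⟨B₁, hB₁, rfl⟩ ⟨B₂, hB₂, rfl⟩ a ha
  obtain ⟨b, hb, hbB⟩ := h B₁ hB₁ B₂ hB₂ a (by simpa using ha)
  exact ⟨b, by simpa using hb, _, hbB, by simp⟩

noncomputable def toMatroid (h : BaseExchange Bs) (hne : Bs.Nonempty) : Matroid E :=
  Matroid.ofIsBaseOfFinite (Bs.sup id).finite_toSet (fun X ↦ ∃ B ∈ Bs, X = ↑B)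
    (hne.elim fun B hB ↦ ⟨B, B, hB, rfl⟩) h.exchangeProperty
    (by rintro _ ⟨B, hB, rfl⟩; exact coe_subset.mpr (le_sup (f := id) hB))

theorem toMatroid_isBase_iff (h : BaseExchange Bs) (hne : Bs.Nonempty) {X : Set E} :
    (h.toMatroid hne).IsBase X ↔ ∃ B ∈ Bs, X = ↑B :=
  Iff.rfl

theorem toMatroid_indep_coe_iff (h : BaseExchange Bs) (hne : Bs.Nonempty) {I : Finset E} :
    (h.toMatroid hne).Indep ↑I ↔ ∃ B ∈ Bs, I ⊆ B := by
  simp only [Matroid.indep_iff, toMatroid_isBase_iff]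
  constructor
  · rintro ⟨_, ⟨B, hB, rfl⟩, hIB⟩
    exact ⟨B, hB, coe_subset.mp hIB⟩
  · rintro ⟨B, hB, hIB⟩
    exact ⟨B, ⟨B, hB, rfl⟩, coe_subset.mpr hIB⟩

theorem card_eq (h : BaseExchange Bs) {B₁ B₂ : Finset E} (hB₁ : B₁ ∈ Bs) (hB₂ : B₂ ∈ Bs) :
    #B₁ = #B₂ := by
  have := h.exchangeProperty.encard_isBase_eq ⟨B₁, hB₁, rfl⟩ ⟨B₂, hB₂, rfl⟩
  rwa [Set.encard_coe_eq_coe_finsetCard, Set.encard_coe_eq_coe_finsetCard, Nat.cast_inj] at this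

theorem exists_insert (h : BaseExchange Bs) {I J : Finset E} (hI : ∃ B ∈ Bs, I ⊆ B)
    (hJ : ∃ B ∈ Bs, J ⊆ B) (hIJ : #I < #J) : ∃ e ∈ J, e ∉ I ∧ ∃ B ∈ Bs, insert e I ⊆ B := by
  have hne : Bs.Nonempty := hI.imp fun _ ↦ And.left
  simp only [← h.toMatroid_indep_coe_iff hne] at hI hJ ⊢
  simpa using hI.augment_finset hJ hIJ

theorem exists_subset_subset_union (h : BaseExchange Bs) {I B : Finset E}
    (hI : ∃ B ∈ Bs, I ⊆ B) (hB : B ∈ Bs) : ∃ B' ∈ Bs, I ⊆ B' ∧ B' ⊆ I ∪ B := by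
  rw [← h.toMatroid_indep_coe_iff ⟨B, hB⟩] at hI
  obtain ⟨_, ⟨B', hB', rfl⟩, hIB', hB'IB⟩ := hI.exists_isBase_subset_union_isBase
    ((h.toMatroid_isBase_iff ⟨B, hB⟩).mpr ⟨B, hB, rfl⟩)
  exact ⟨B', hB', coe_subset.mp hIB', by simpa [← coe_union] using hB'IB⟩

end BaseExchange

theorem card_le_matRank {I A : Finset E} (hI : ∃ B ∈ Bs, I ⊆ B) (hIA : I ⊆ A) :
    #I ≤ matRank Bs A :=
  le_sup (f := card) (mem_filter.mpr ⟨mem_powerset.mpr hIA, hI⟩)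

theorem exists_card_eq_matRank (hne : Bs.Nonempty) (A : Finset E) :
    ∃ I ⊆ A, (∃ B ∈ Bs, I ⊆ B) ∧ #I = matRank Bs A := by
  obtain ⟨I, hI, hcard⟩ := exists_mem_eq_sup (A.powerset.filter fun X ↦ ∃ B ∈ Bs, X ⊆ B)
    ⟨∅, mem_filter.mpr ⟨empty_mem_powerset A, hne.imp fun _ hB ↦ ⟨hB, empty_subset _⟩⟩⟩ card
  rw [mem_filter, mem_powerset] at hI
  exact ⟨I, hI.1, hI.2, hcard.symm⟩

theorem BaseExchange.matRank_univ [Fintype E] (h : BaseExchange Bs) {B : Finset E}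
    (hB : B ∈ Bs) : matRank Bs univ = #B := by
  refine (Finset.sup_le fun X hX ↦ ?_).antisymm
    (card_le_matRank ⟨B, hB, subset_rfl⟩ (subset_univ B))
  obtain ⟨B', hB', hXB'⟩ := (mem_filter.mp hX).2
  exact (card_le_card hXB').trans (h.card_eq hB' hB).le

theorem BaseExchange.card_inter_eq_matRank (h : BaseExchange Bs) {w : E → ℝ} {A B : Finset E}
    (hB : B ∈ Bs) (hmax : ∀ B' ∈ Bs, ∑ i ∈ B', w i ≤ ∑ i ∈ B, w i)
    (hA : ∀ e ∈ A, ∀ f ∉ A, w f < w e) : #(A ∩ B) = matRank Bs A := by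
  -- Otherwise augment `A ∩ B` by some `e ∈ A \ B` and extend to a base `B' ⊆ insert e B`;
  -- then `B' = insert e (B.erase f)` with `f ∉ A`, so `B'` is heavier than `B`.
  refine (card_le_matRank ⟨B, hB, inter_subset_right⟩ inter_subset_left).antisymm
    (not_lt.mp fun hlt ↦ ?_)
  obtain ⟨I, hIA, hI, hIcard⟩ := exists_card_eq_matRank ⟨B, hB⟩ A
  obtain ⟨e, heI, heAB, he⟩ :=
    h.exists_insert ⟨B, hB, inter_subset_right⟩ hI (hIcard ▸ hlt)
  have heA := hIA heI
  have heB : e ∉ B := fun heB ↦ heAB (mem_inter.mpr ⟨heA, heB⟩)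
  obtain ⟨B', hB', hsub, hsub'⟩ := h.exists_subset_subset_union he hB
  have hB'B : B' \ B = {e} := by
    ext x
    simp only [mem_sdiff, mem_singleton]
    constructor
    · rintro ⟨hxB', hxB⟩
      simpa [hxB] using hsub' hxB'
    · rintro rfl
      exact ⟨hsub (mem_insert_self x _), heB⟩
  obtain ⟨f, hf⟩ : ∃ f, B \ B' = {f} := card_eq_one.mp <| by
    rw [card_sdiff_comm (h.card_eq hB hB'), hB'B, card_singleton]
  have hfB : f ∈ B ∧ f ∉ B' := mem_sdiff.mp (hf ▸ mem_singleton_self f)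
  have hfA : f ∉ A := fun hfA ↦ hfB.2 (hsub (mem_insert_of_mem (mem_inter.mpr ⟨hfA, hfB.1⟩)))
  have hswap := sum_sdiff_sub_sum_sdiff (s₁ := B) (s₂ := B') (f := w)
  rw [hB'B, hf, sum_singleton, sum_singleton] at hswap
  linarith [hmax B' hB', hA e heA f hfA]

theorem sum_single_one_apply (B : Finset E) (i : E) :
    (∑ b ∈ B, Pi.single b (1 : ℝ)) i = if i ∈ B then 1 else 0 := by
  simp [Pi.single_apply]

theorem sum_sum_single_one (A B : Finset E) :
    ∑ i ∈ A, (∑ b ∈ B, Pi.single b (1 : ℝ)) i = #(A ∩ B) := by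
  simp [sum_ite_mem]

def baseVectors (Bs : Finset (Finset E)) : Set (E → ℝ) :=
  {x | ∃ B ∈ Bs, x = ∑ b ∈ B, Pi.single b 1}

theorem finite_baseVectors (Bs : Finset (Finset E)) : (baseVectors Bs).Finite :=
  (Bs.finite_toSet.image fun B ↦ ∑ b ∈ B, Pi.single b (1 : ℝ)).subset <| by
    rintro _ ⟨B, hB, rfl⟩
    exact ⟨B, hB, rfl⟩

theorem convexHull_baseVectors_subset_cube :
    convexHull ℝ (baseVectors Bs) ⊆ Set.univ.pi fun _ ↦ Set.Icc 0 1 := by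
  refine convexHull_min ?_ (convex_pi fun _ _ ↦ convex_Icc 0 1)
  rintro _ ⟨B, -, rfl⟩ i -
  rw [sum_single_one_apply]
  split_ifs <;> norm_num

theorem sum_single_one_mem_extremePoints {B : Finset E} (hB : B ∈ Bs) :
    (∑ b ∈ B, Pi.single b (1 : ℝ)) ∈ Set.extremePoints ℝ (convexHull ℝ (baseVectors Bs)) := by
  refine inter_extremePoints_subset_extremePoints_of_subset convexHull_baseVectors_subset_cube
    ⟨subset_convexHull ℝ _ ⟨B, hB, rfl⟩, ?_⟩
  rw [extremePoints_pi]
  intro i _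
  rw [Set.extremePoints_Icc zero_le_one, sum_single_one_apply]
  split_ifs <;> simp

variable [Fintype E]

def matroidPolytope (Bs : Finset (Finset E)) : Set (E → ℝ) :=
  {x | ∑ i, x i = matRank Bs univ ∧ ∀ A : Finset E, ∑ i ∈ A, x i ≤ matRank Bs A}

theorem convex_matroidPolytope : Convex ℝ (matroidPolytope Bs) := by
  rintro x ⟨hx, hxA⟩ y ⟨hy, hyA⟩ a b ha hb hab
  have hsum (A : Finset E) :
      ∑ i ∈ A, (a • x + b • y) i = a * ∑ i ∈ A, x i + b * ∑ i ∈ A, y i := by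
    simp [sum_add_distrib, mul_sum]
  refine ⟨by rw [hsum, hx, hy, ← add_mul, hab, one_mul], fun A ↦ ?_⟩
  calc ∑ i ∈ A, (a • x + b • y) i
      ≤ a * matRank Bs A + b * matRank Bs A := by
        rw [hsum]
        exact add_le_add (mul_le_mul_of_nonneg_left (hxA A) ha)
          (mul_le_mul_of_nonneg_left (hyA A) hb)
    _ = matRank Bs A := by rw [← add_mul, hab, one_mul]

theorem BaseExchange.baseVectors_subset_matroidPolytope (h : BaseExchange Bs) :
    baseVectors Bs ⊆ matroidPolytope Bs := by
  rintro _ ⟨B, hB, rfl⟩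
  refine ⟨by rw [sum_sum_single_one, univ_inter, h.matRank_univ hB], fun A ↦ ?_⟩
  rw [sum_sum_single_one]
  exact_mod_cast card_le_matRank ⟨B, hB, inter_subset_right⟩ inter_subset_left

theorem BaseExchange.exists_sum_mul_le (h : BaseExchange Bs) (hne : Bs.Nonempty) {x : E → ℝ}
    (hx : x ∈ matroidPolytope Bs) (w : E → ℝ) : ∃ B ∈ Bs, ∑ i, w i * x i ≤ ∑ i ∈ B, w i := by
  obtain ⟨B, hB, hmax⟩ := exists_max_image Bs (fun B ↦ ∑ i ∈ B, w i) hne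
  refine ⟨B, hB, ?_⟩
  have key := sum_mul_nonpos_of_superlevel w (x - ∑ b ∈ B, Pi.single b 1) univ ?_ fun t ↦ ?_
  · simpa [mul_sub, sum_sub_distrib, sum_single_one_apply, mul_ite, sum_ite_mem] using key
  · simp only [Pi.sub_apply, sum_sub_distrib, sum_sum_single_one, univ_inter, hx.1,
      h.matRank_univ hB, sub_self]
  · have hA := h.card_inter_eq_matRank hB hmax (A := {i | t ≤ w i})
      (by simp only [mem_filter, mem_univ, true_and]; intros; linarith)
    simp only [Pi.sub_apply, sum_sub_distrib, sum_sum_single_one, hA, sub_nonpos]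
    exact hx.2 _

theorem BaseExchange.matroidPolytope_subset_convexHull (h : BaseExchange Bs)
    (hne : Bs.Nonempty) : matroidPolytope Bs ⊆ convexHull ℝ (baseVectors Bs) := by
  intro x hx
  refine mem_convexHull_of_forall_exists_le (finite_baseVectors Bs) fun f ↦ ?_
  obtain ⟨B, hB, hle⟩ := h.exists_sum_mul_le hne hx fun i ↦ f fun j ↦ if i = j then 1 else 0
  refine ⟨_, ⟨B, hB, rfl⟩, ?_⟩
  have hf (y : E → ℝ) := (f : (E → ℝ) →ₗ[ℝ] ℝ).pi_apply_eq_sum_univ y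
  simp only [ContinuousLinearMap.coe_coe, smul_eq_mul] at hf
  rw [hf, hf]
  simpa [mul_comm, sum_single_one_apply, ite_mul, sum_ite_mem] using hle

end

/-- The matroid polytope: the convex hull of the indicator vectors of the bases of a matroid
`M` equals `{x | ∑ x = r(E) and ∑_{i ∈ A} x i ≤ r(A) for all A}`, and every basis indicator
vector is an extreme point of this polytope. -/
theorem stmt7 {E : Type*} [Fintype E] [DecidableEq E]
    (Bs : Finset (Finset E)) (hne : Bs.Nonempty)
    (hexch : ∀ B₁ ∈ Bs, ∀ B₂ ∈ Bs, ∀ a ∈ B₁ \ B₂, ∃ b ∈ B₂ \ B₁,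
      insert b (B₁.erase a) ∈ Bs) :
    (convexHull ℝ {x : E → ℝ | ∃ B ∈ Bs, x = ∑ b ∈ B, Pi.single b 1} =
        {x : E → ℝ | (∑ i, x i) = (matRank Bs Finset.univ : ℝ) ∧
          ∀ A : Finset E, (∑ i ∈ A, x i) ≤ (matRank Bs A : ℝ)}) ∧
      ∀ B ∈ Bs,
        (∑ b ∈ B, Pi.single b (1 : ℝ)) ∈
          Set.extremePoints ℝ
            (convexHull ℝ {x : E → ℝ | ∃ B ∈ Bs, x = ∑ b ∈ B, Pi.single b 1}) := by
  have h : BaseExchange Bs := hexch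
  exact ⟨(convexHull_min h.baseVectors_subset_matroidPolytope convex_matroidPolytope).antisymm
    (h.matroidPolytope_subset_convexHull hne), fun B hB ↦ sum_single_one_mem_extremePoints hB⟩
end

section
/- Let P be a finite partially ordered set. Then the set {x : P → ℝ | ∑_{i ∈ P} x(i) = 0 and ∑_{i ∈ A} x(i) ≤ 0 for every lower set A of P} equals the set of all finite nonnegative real linear combinations of the vectors e_i − e_j with j < i in P; moreover it also equals the set of nonnegative linear combinations of the vectors e_i − e_j where i covers j in P. -/
/-!
The lower-set inequalities define a convex cone containing every `e_i - e_j` with `j < i`, which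
gives one inclusion. Conversely, let `x` be in this cone and vanish outside `S`; induct on `S`.
Take `m` maximal in `S`. If no `j ∈ S` lies below `m`, the lower set `Iic m` and the upper set
`Ici m` force `x m = 0`. Otherwise subtract from `x` the largest multiple `t • (e_m - e_j)` that
keeps it in the cone: some lower set `A` with `j ∈ A`, `m ∉ A` then has sum zero, and the parts of
the result on `A` and off `A` lie in the cone again and vanish outside `S ∩ A` and `S \ A`.
Finally, `<` is the transitive closure of `⋖` in a finite poset and
`e_k - e_i = (e_k - e_j) + (e_j - e_i)`, so covers generate the same cone.
-/

open Finset

section EdgeCone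

variable {P : Type*} [DecidableEq P]

def edgeCone (r : P → P → Prop) : PointedCone ℝ (P → ℝ) :=
  PointedCone.hull ℝ {v | ∃ j i, r j i ∧ v = Pi.single i 1 - Pi.single j 1}

lemma single_sub_single_mem_edgeCone {r : P → P → Prop} {i j : P} (h : r j i) :
    Pi.single i 1 - Pi.single j 1 ∈ edgeCone r :=
  Submodule.subset_span ⟨j, i, h, rfl⟩

lemma edgeCone_mono {r s : P → P → Prop} (h : ∀ j i, r j i → s j i) :
    edgeCone r ≤ edgeCone s :=
  Submodule.span_mono fun _ ⟨j, i, hji, hv⟩ => ⟨j, i, h j i hji, hv⟩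

lemma edgeCone_transGen (r : P → P → Prop) : edgeCone (Relation.TransGen r) = edgeCone r := by
  refine le_antisymm (Submodule.span_le.2 ?_) (edgeCone_mono fun _ _ => .single)
  rintro _ ⟨j, i, h, rfl⟩
  induction h with
  | single h => exact single_sub_single_mem_edgeCone h
  | @tail k i _ hki ih =>
    rw [← sub_add_sub_cancel _ (Pi.single k 1)]
    exact add_mem (single_sub_single_mem_edgeCone hki) ih

lemma mem_edgeCone_iff [Fintype P] {r : P → P → Prop} {x : P → ℝ} :
    x ∈ edgeCone r ↔ ∃ c : P × P → ℝ, (∀ p, 0 ≤ c p) ∧ (∀ p : P × P, ¬ r p.2 p.1 → c p = 0) ∧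
      x = ∑ p : P × P, c p • (Pi.single p.1 (1 : ℝ) - Pi.single p.2 1) := by
  constructor
  · intro hx
    induction hx using Submodule.span_induction with
    | mem _ hv =>
      obtain ⟨j, i, h, rfl⟩ := hv
      refine ⟨Pi.single (i, j) 1, fun p => ?_, fun p hp => ?_, ?_⟩
      · by_cases hp : p = (i, j) <;> simp [hp]
      · exact Pi.single_eq_of_ne (by rintro rfl; exact hp h) _
      · simp [Pi.single_apply, ite_smul]
    | zero => exact ⟨0, fun _ => le_rfl, fun _ _ => rfl, by simp⟩
    | add x y _ _ hx hy =>
      obtain ⟨c, hc0, hcr, rfl⟩ := hx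
      obtain ⟨d, hd0, hdr, rfl⟩ := hy
      refine ⟨c + d, fun p => add_nonneg (hc0 p) (hd0 p), fun p hp => ?_, ?_⟩
      · simp [hcr p hp, hdr p hp]
      · simp [add_smul, sum_add_distrib]
    | smul a x _ hx =>
      obtain ⟨c, hc0, hcr, rfl⟩ := hx
      refine ⟨(a : ℝ) • c, fun p => mul_nonneg a.2 (hc0 p), fun p hp => by simp [hcr p hp], ?_⟩
      simp only [smul_sum, Pi.smul_apply, smul_eq_mul, mul_smul]
      rfl
  · rintro ⟨c, hc0, hcr, rfl⟩
    refine sum_mem fun p _ => ?_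
    by_cases h : r p.2 p.1
    · exact PointedCone.smul_mem _ (hc0 p) (single_sub_single_mem_edgeCone h)
    · simp [hcr p h]

lemma edgeCone_covBy_eq_lt [Fintype P] [PartialOrder P] :
    edgeCone (· ⋖ · : P → P → Prop) = edgeCone (· < ·) := by
  classical
  let := Fintype.toLocallyFiniteOrder (α := P)
  have : (· < · : P → P → Prop) = Relation.TransGen (· ⋖ ·) :=
    funext₂ fun _ _ => propext lt_iff_transGen_covBy
  rw [this, edgeCone_transGen]

lemma sum_single_sub_single (B : Finset P) (i j : P) :
    ∑ k ∈ B, (Pi.single i (1 : ℝ) - Pi.single j 1 : P → ℝ) k =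
      (if i ∈ B then 1 else 0) - if j ∈ B then 1 else 0 := by
  simp [sum_sub_distrib, sum_pi_single']

end EdgeCone

section PosetCone

variable {P : Type*} [Fintype P]

variable (P) in
def posetCone [LE P] : PointedCone ℝ (P → ℝ) where
  carrier := {x | (∑ i, x i) = 0 ∧ ∀ A : Finset P, IsLowerSet (A : Set P) → (∑ i ∈ A, x i) ≤ 0}
  add_mem' := fun ⟨hx, hxA⟩ ⟨hy, hyA⟩ =>
    ⟨by simp [sum_add_distrib, hx, hy], fun A hA => by
      simpa [sum_add_distrib] using add_nonpos (hxA A hA) (hyA A hA)⟩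
  zero_mem' := ⟨by simp, fun _ _ => by simp⟩
  smul_mem' := fun c x ⟨hx, hxA⟩ =>
    ⟨by simp [← smul_sum, hx], fun A hA => by
      show ∑ i ∈ A, (c : ℝ) * x i ≤ 0
      exact mul_sum A x (c : ℝ) ▸ mul_nonpos_of_nonneg_of_nonpos c.2 (hxA A hA)⟩

section LE

variable [LE P] {x : P → ℝ}

lemma sum_nonneg_of_mem_posetCone (hx : x ∈ posetCone P) {U : Finset P}
    (hU : IsUpperSet (U : Set P)) : 0 ≤ ∑ i ∈ U, x i := by
  classical
  have := hx.2 Uᶜ (by simpa using hU.compl)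
  linarith [sum_add_sum_compl U x, hx.1]

variable [DecidableEq P] {A : Finset P}

lemma ite_mem_posetCone (hx : x ∈ posetCone P) (hA : IsLowerSet (A : Set P))
    (hxA : ∑ i ∈ A, x i = 0) : (fun i => if i ∈ A then x i else 0) ∈ posetCone P := by
  refine ⟨by simpa using hxA, fun B hB => ?_⟩
  simpa using hx.2 (B ∩ A) (by simpa using hB.inter hA)

lemma sub_ite_mem_posetCone (hx : x ∈ posetCone P) (hA : IsLowerSet (A : Set P))
    (hxA : ∑ i ∈ A, x i = 0) : x - (fun i => if i ∈ A then x i else 0) ∈ posetCone P := by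
  refine ⟨by simpa [sum_sub_distrib, hx.1] using hxA, fun B hB => ?_⟩
  have := hx.2 (B ∪ A) (by simpa using hB.union hA)
  simp only [Pi.sub_apply, sum_sub_distrib, sum_ite_mem]
  linarith [sum_union_inter (s₁ := B) (s₂ := A) (f := x)]

end LE

lemma exists_tight_shift [Preorder P] [DecidableEq P] {x : P → ℝ}
    (hx : x ∈ posetCone P) {j m : P} (hjm : j < m) :
    ∃ t : ℝ, 0 ≤ t ∧ x - t • (Pi.single m 1 - Pi.single j 1) ∈ posetCone P ∧
      ∃ A : Finset P, IsLowerSet (A : Set P) ∧ j ∈ A ∧ m ∉ A ∧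
        ∑ i ∈ A, (x - t • (Pi.single m 1 - Pi.single j 1) : P → ℝ) i = 0 := by
  classical
  set 𝒜 := univ.filter fun A : Finset P => IsLowerSet (A : Set P) ∧ j ∈ A ∧ m ∉ A
  have h𝒜 : 𝒜.Nonempty := ⟨(Set.Iic j).toFinset, by
    simpa [𝒜, Set.coe_toFinset] using ⟨isLowerSet_Iic j, hjm.not_ge⟩⟩
  obtain ⟨A, hA, hAmin⟩ := 𝒜.exists_min_image (fun A => -∑ i ∈ A, x i) h𝒜
  simp only [𝒜, mem_filter, mem_univ, true_and] at hA hAmin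
  set t := -∑ i ∈ A, x i
  have hsum : ∀ B : Finset P, ∑ i ∈ B, (x - t • (Pi.single m 1 - Pi.single j 1) : P → ℝ) i =
      ∑ i ∈ B, x i - t * ((if m ∈ B then 1 else 0) - if j ∈ B then 1 else 0) := fun B => by
    rw [← sum_single_sub_single, mul_sum, ← sum_sub_distrib]
    rfl
  refine ⟨t, by linarith [hx.2 A hA.1], ⟨?_, fun B hB => ?_⟩, A, hA.1, hA.2.1, hA.2.2, ?_⟩
  · rw [hsum]
    simp [hx.1]
  · rw [hsum]
    by_cases hmB : m ∈ B
    · have hjB : j ∈ B := hB hjm.le hmB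
      simpa [hmB, hjB] using hx.2 B hB
    by_cases hjB : j ∈ B
    · simp only [hmB, hjB, if_true, if_false]
      linarith [hAmin B ⟨hB, hjB, hmB⟩]
    · simpa [hmB, hjB] using hx.2 B hB
  · rw [hsum]
    simp [hA.2.1, hA.2.2, t]

lemma apply_eq_zero_of_minimal_of_maximal [PartialOrder P] {x : P → ℝ}
    (hx : x ∈ posetCone P) {S : Finset P} (hxS : ∀ i ∉ S, x i = 0) {m : P}
    (hmin : Minimal (· ∈ S) m) (hmax : Maximal (· ∈ S) m) : x m = 0 := by
  classical
  have hle : x m ≤ 0 := by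
    have := hx.2 (Set.Iic m).toFinset (by simpa [Set.coe_toFinset] using isLowerSet_Iic m)
    rwa [sum_eq_single m (fun i hi him => hxS i fun hiS =>
      him (le_antisymm (by simpa using hi) (hmin.le_of_le hiS (by simpa using hi)))) (by simp)]
      at this
  have hge : 0 ≤ x m := by
    have := sum_nonneg_of_mem_posetCone hx (U := (Set.Ici m).toFinset)
      (by simpa [Set.coe_toFinset] using isUpperSet_Ici m)
    rwa [sum_eq_single m (fun i hi him => hxS i fun hiS =>
      him (le_antisymm (hmax.le_of_ge hiS (by simpa using hi)) (by simpa using hi))) (by simp)]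
      at this
  exact le_antisymm hle hge

lemma mem_edgeCone_lt_of_mem_posetCone [PartialOrder P] [DecidableEq P]
    (S : Finset P) {x : P → ℝ} (hx : x ∈ posetCone P) (hxS : ∀ i ∉ S, x i = 0) :
    x ∈ edgeCone (· < ·) := by
  induction S using Finset.strongInduction generalizing x with
  | H S ih =>
  obtain rfl | hS := S.eq_empty_or_nonempty
  · obtain rfl : x = 0 := funext fun i => hxS i (notMem_empty i)
    exact zero_mem _
  obtain ⟨m, hmax⟩ := S.exists_maximal hS
  by_cases hmin : Minimal (· ∈ S) m
  · have hxm := apply_eq_zero_of_minimal_of_maximal hx hxS hmin hmax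
    refine ih (S.erase m) (erase_ssubset hmax.prop) hx fun i hi => ?_
    obtain rfl | him := eq_or_ne i m
    · exact hxm
    · exact hxS i fun hiS => hi (mem_erase.2 ⟨him, hiS⟩)
  obtain ⟨j, hjm, hjS⟩ := (not_minimal_iff_exists_lt hmax.prop).1 hmin
  obtain ⟨t, ht, hx', A, hA, hjA, hmA, hx'A⟩ := exists_tight_shift hx hjm
  set x' := x - t • (Pi.single m 1 - Pi.single j 1)
  set y := fun i => if i ∈ A then x' i else 0
  have hx'S : ∀ i ∉ S, x' i = 0 := fun i hi => by
    simp [x', hxS i hi, (ne_of_mem_of_not_mem hmax.prop hi).symm,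
      (ne_of_mem_of_not_mem hjS hi).symm]
  have hy : y ∈ edgeCone (· < ·) := by
    refine ih (S ∩ A) ((ssubset_iff_of_subset inter_subset_left).2
      ⟨m, hmax.prop, fun h => hmA (mem_inter.1 h).2⟩) (ite_mem_posetCone hx' hA hx'A) fun i hi => ?_
    by_cases hiA : i ∈ A
    · simp [y, hiA, hx'S i fun hiS => hi (mem_inter.2 ⟨hiS, hiA⟩)]
    · simp [y, hiA]
  have hx'y : x' - y ∈ edgeCone (· < ·) := by
    refine ih (S \ A) ((ssubset_iff_of_subset sdiff_subset).2
      ⟨j, hjS, fun h => (mem_sdiff.1 h).2 hjA⟩) (sub_ite_mem_posetCone hx' hA hx'A) fun i hi => ?_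
    by_cases hiA : i ∈ A
    · simp [y, hiA]
    · simp [y, hiA, hx'S i fun hiS => hi (mem_sdiff.2 ⟨hiS, hiA⟩)]
  have hdecomp : x = (y + (x' - y)) + t • (Pi.single m 1 - Pi.single j 1) := by
    rw [add_sub_cancel, sub_add_cancel]
  rw [hdecomp]
  exact add_mem (add_mem hy hx'y) (PointedCone.smul_mem _ ht (single_sub_single_mem_edgeCone hjm))

lemma edgeCone_lt_le_posetCone [Preorder P] [DecidableEq P] :
    edgeCone (· < ·) ≤ posetCone P := by
  refine Submodule.span_le.2 ?_
  rintro _ ⟨j, i, hji, rfl⟩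
  refine ⟨by simp, fun A hA => ?_⟩
  rw [sum_single_sub_single]
  by_cases hiA : i ∈ A
  · have hjA : j ∈ A := hA hji.le hiA
    simp [hiA, hjA]
  · by_cases hjA : j ∈ A <;> simp [hiA, hjA]

lemma posetCone_eq_edgeCone_lt [PartialOrder P] [DecidableEq P] :
    posetCone P = edgeCone (· < ·) :=
  le_antisymm (fun _ hx => mem_edgeCone_lt_of_mem_posetCone univ hx (by simp))
    edgeCone_lt_le_posetCone

end PosetCone

/-- The poset cone: for a finite poset `P`, the set
`{x | ∑ x = 0 and ∑_{i ∈ A} x i ≤ 0 for every lower set A}` equals the set of nonnegative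
linear combinations of the vectors `e_i − e_j` with `j < i`, and also equals the set of
nonnegative linear combinations of the vectors `e_i − e_j` where `i` covers `j`. -/
theorem stmt8 {P : Type*} [Fintype P] [PartialOrder P] [DecidableEq P] :
    ({x : P → ℝ | (∑ i, x i) = 0 ∧
        ∀ A : Finset P, IsLowerSet (A : Set P) → (∑ i ∈ A, x i) ≤ 0} =
      {x : P → ℝ | ∃ c : P × P → ℝ, (∀ p, 0 ≤ c p) ∧
        (∀ p : P × P, ¬ p.2 < p.1 → c p = 0) ∧
        x = ∑ p : P × P, c p • (Pi.single p.1 (1 : ℝ) - Pi.single p.2 1)}) ∧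
    ({x : P → ℝ | (∑ i, x i) = 0 ∧
        ∀ A : Finset P, IsLowerSet (A : Set P) → (∑ i ∈ A, x i) ≤ 0} =
      {x : P → ℝ | ∃ c : P × P → ℝ, (∀ p, 0 ≤ c p) ∧
        (∀ p : P × P, ¬ p.2 ⋖ p.1 → c p = 0) ∧
        x = ∑ p : P × P, c p • (Pi.single p.1 (1 : ℝ) - Pi.single p.2 1)}) :=
  ⟨Set.ext fun x => (SetLike.ext_iff.1 posetCone_eq_edgeCone_lt x).trans mem_edgeCone_iff,
    Set.ext fun x => (SetLike.ext_iff.1 (posetCone_eq_edgeCone_lt.trans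
      edgeCone_covBy_eq_lt.symm) x).trans mem_edgeCone_iff⟩
end

section
/- Let I be a finite set. A function f : Finset I → ℤ is relational (i.e. there exist a finite set J and a relation R ⊆ I × J with f(A) = |{j ∈ J : (a, j) ∈ R for some a ∈ A}| for all A ⊆ I) if and only if there exists a function y assigning a natural number to each nonempty subset of I such that f(A) = ∑_{K : K ∩ A ≠ ∅} y(K) for every A ⊆ I. -/
/-!
A relation `R ⊆ I × J` is the same as the family of its columns `R_j = {a | (a, j) ∈ R}`, and
`j ∈ R(A)` exactly when `R_j` meets `A`. Grouping the elements `j` by their column therefore gives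
`|R(A)| = ∑_{K ∩ A ≠ ∅} y K` with `y K` the number of columns equal to `K`. Conversely, any
`y : Finset I → ℕ` arises this way: take `y K` columns equal to `K` for every `K`.
-/

open Finset

theorem card_filter_comp_eq_sum_card_fiber {α β : Type*} [Fintype α] [Fintype β]
    [DecidableEq β] (g : α → β) (p : β → Prop) [DecidablePred p] :
    #{a | p (g a)} = ∑ b with p b, #{a | g a = b} := by
  rw [card_eq_sum_card_fiberwise (f := g) (t := {b | p b}) fun a ha => by simpa using ha]
  refine sum_congr rfl fun b hb => congrArg card ?_
  ext a
  simp only [mem_filter, mem_univ, true_and] at hb ⊢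
  exact ⟨And.right, fun h => ⟨h ▸ hb, h⟩⟩

theorem exists_fin_card_fiber_eq {β : Type*} [Fintype β] [DecidableEq β] (y : β → ℕ) :
    ∃ (m : ℕ) (g : Fin m → β), ∀ b, #{j | g j = b} = y b := by
  let e := (Fintype.equivFin (Σ b, Fin (y b))).symm
  refine ⟨_, fun j => (e j).1, fun b => ?_⟩
  have hfiber :
      ({σ | σ.1 = b} : Finset (Σ b, Fin (y b))) = ({b} : Finset β).sigma fun _ => univ := by
    ext σ
    simp
  rw [card_equiv e (t := {σ | σ.1 = b}) (by simp), hfiber, card_sigma]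
  simp

section Relation

variable {I J : Type*} [Fintype I] [DecidableEq I]

def relColumn [DecidableEq J] (R : Finset (I × J)) (j : J) : Finset I := {a | (a, j) ∈ R}

def relOfColumns [Fintype J] (c : J → Finset I) : Finset (I × J) := {p | p.1 ∈ c p.2}

theorem relColumn_relOfColumns [Fintype J] [DecidableEq J] (c : J → Finset I) :
    relColumn (relOfColumns c) = c := by
  ext j a
  simp [relColumn, relOfColumns]

theorem exists_mem_iff_relColumn_inter_nonempty [DecidableEq J] (R : Finset (I × J))
    (A : Finset I) (j : J) : (∃ a ∈ A, (a, j) ∈ R) ↔ (relColumn R j ∩ A).Nonempty := by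
  simp only [Finset.Nonempty, mem_inter, relColumn, mem_filter, mem_univ, true_and]
  exact ⟨fun ⟨a, haA, haR⟩ => ⟨a, haR, haA⟩, fun ⟨a, haR, haA⟩ => ⟨a, haA, haR⟩⟩

theorem card_relImage_eq_sum_card_relColumn_eq [Fintype J] [DecidableEq J]
    (R : Finset (I × J)) (A : Finset I) :
    #{j | ∃ a ∈ A, (a, j) ∈ R} = ∑ K with (K ∩ A).Nonempty, #{j | relColumn R j = K} := by
  simp_rw [exists_mem_iff_relColumn_inter_nonempty]
  exact card_filter_comp_eq_sum_card_fiber (relColumn R) fun K => (K ∩ A).Nonempty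

end Relation

/-- A function `f : Finset I → ℤ` is relational if and only if there is a function `y`
assigning a natural number to each (nonempty) subset of `I` such that
`f A = ∑_{K : K ∩ A ≠ ∅} y K` for every `A ⊆ I`. -/
theorem stmt11 {I : Type*} [Fintype I] [DecidableEq I] (f : Finset I → ℤ) :
    (∃ (m : ℕ) (R : Finset (I × Fin m)), ∀ A : Finset I,
        f A = ((Finset.univ.filter fun j : Fin m => ∃ a ∈ A, (a, j) ∈ R).card : ℤ)) ↔
      (∃ y : Finset I → ℕ, ∀ A : Finset I,
        f A = ∑ K ∈ Finset.univ.filter fun K : Finset I => (K ∩ A).Nonempty, (y K : ℤ)) := by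
  constructor
  · rintro ⟨m, R, hR⟩
    refine ⟨fun K => #{j | relColumn R j = K}, fun A => ?_⟩
    rw [hR, card_relImage_eq_sum_card_relColumn_eq, Nat.cast_sum]
  · rintro ⟨y, hy⟩
    obtain ⟨m, c, hc⟩ := exists_fin_card_fiber_eq y
    refine ⟨m, relOfColumns c, fun A => ?_⟩
    rw [hy, card_relImage_eq_sum_card_relColumn_eq, relColumn_relOfColumns, Nat.cast_sum]
    simp only [hc]
end

section
/- Let 𝕂 be a field of characteristic zero and a : ℕ → 𝕂 with a(0) = 1. Let A = ∑_{n ≥ 0} a(n) x^n/n! be the corresponding exponential formal power series and let B be a formal power series with A·B = 1; write b(n) = n!·(coefficient of x^n in B). Then for every n ≥ 1, b(n) = ∑_{λ ⊢ n} (−1)^{k(λ)} · (n!/∏_i λ_i!) · (k(λ)!/∏_{j ≥ 1} m_j(λ)!) · ∏_i a(λ_i), where the sum is over all integer partitions λ = (λ_1, …, λ_{k(λ)}) of n, k(λ) is the number of parts of λ, and m_j(λ) is the number of parts of λ equal to j. -/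
/-!
Put `c i = a i / i!` and let `g n = ∑_{λ ⊢ n} (-1)^k(λ) · (k(λ)! / ∏ mⱼ(λ)!) · ∏ c_{λᵢ}`.
The multinomial coefficient obeys the Pascal-type rule
`k! / ∏ mⱼ! = ∑_{i a part} (k-1)! / ∏ mⱼ(λ ∖ i)!`, and `λ ↦ (i, λ ∖ i)` is a bijection between
partitions of `n` with a marked part value `i` and pairs `(i, μ)` with `μ ⊢ n - i`. Together these
give `g n = -∑_{i=1}^n c i · g (n - i)` for `n ≥ 1`, i.e. `(∑ cᵢ xⁱ) · (∑ gₙ xⁿ) = 1`. Hence `g n`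
is the `n`-th coefficient of `B`, and multiplying by `n!` gives the formula.
-/

open Finset

namespace Multiset

variable {α : Type*} [DecidableEq α]

theorem countPerms_cons_mul (a : α) (m : Multiset α) :
    (a ::ₘ m).countPerms * (m.count a + 1) = (card m + 1) * m.countPerms := by
  rw [countPerms_filter_ne a (a ::ₘ m), countPerms_filter_ne a m,
    filter_cons_of_neg (p := (a ≠ ·)) m (not_not.2 rfl), count_cons_self, card_cons,
    mul_right_comm, ← Nat.add_one_mul_choose_eq, mul_assoc]

theorem count_mul_countPerms {a : α} {m : Multiset α} (ha : a ∈ m) :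
    m.count a * m.countPerms = card m * (m.erase a).countPerms := by
  have h := countPerms_cons_mul a (m.erase a)
  rwa [cons_erase ha, count_erase_self, Nat.sub_add_cancel (count_pos.2 ha),
    card_erase_add_one ha, mul_comm] at h

theorem countPerms_eq_sum_erase {m : Multiset α} (hm : m ≠ 0) :
    m.countPerms = ∑ a ∈ m.toFinset, (m.erase a).countPerms := by
  refine Nat.eq_of_mul_eq_mul_left (card_pos.2 hm) ?_
  calc card m * m.countPerms = ∑ a ∈ m.toFinset, m.count a * m.countPerms := by
        rw [← Finset.sum_mul, toFinset_sum_count_eq]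
    _ = card m * ∑ a ∈ m.toFinset, (m.erase a).countPerms := by
        rw [Finset.mul_sum]
        exact Finset.sum_congr rfl fun a ha => count_mul_countPerms (mem_toFinset.1 ha)

theorem countPerms_mul_prod_factorial {m : Multiset α} {s : Finset α} (hs : m.toFinset ⊆ s) :
    m.countPerms * ∏ a ∈ s, (m.count a).factorial = (card m).factorial := by
  have h := Nat.multinomial_spec s m.toFinsupp
  simp only [toFinsupp_apply, sum_count_eq_card fun a ha => hs (mem_toFinset.2 ha)] at h
  rwa [countPerms, Finsupp.multinomial_eq_of_support_subset (s := s) (by rwa [toFinsupp_support]),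
    mul_comm]

end Multiset

namespace Nat.Partition

theorem sum_sum_erase_parts {M : Type*} [AddCommMonoid M] (n : ℕ) (f : ℕ → Multiset ℕ → M) :
    ∑ p : n.Partition, ∑ i ∈ p.parts.toFinset, f i (p.parts.erase i) =
      ∑ i ∈ Icc 1 n, ∑ q : (n - i).Partition, f i q.parts := by
  classical
  rw [Finset.sum_comm' (t' := Icc 1 n) (s' := fun i => univ.filter (i ∈ ·.parts))]
  · refine Finset.sum_congr rfl fun i hi => ?_
    obtain ⟨hi1, hin⟩ := mem_Icc.1 hi
    rw [Finset.sum_subtype (p := (i ∈ ·.parts)) _ (fun p => by simp)]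
    exact Fintype.sum_equiv (partitionWithPartEquiv hi1 hin) _ _ (fun p => by simp)
  · intro p i
    simp only [mem_univ, Multiset.mem_toFinset, true_and, mem_filter, mem_Icc]
    exact ⟨fun h => ⟨h, p.parts_pos h, p.le_of_mem_parts h⟩, fun h => h.1⟩

end Nat.Partition

section

variable {R : Type*} [CommRing R] (c : ℕ → R)

noncomputable def signedPartitionTerm (m : Multiset ℕ) : R :=
  (-1) ^ Multiset.card m * m.countPerms * (m.map c).prod

noncomputable def partitionInvCoeff (n : ℕ) : R :=
  ∑ p : n.Partition, signedPartitionTerm c p.parts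

theorem signedPartitionTerm_eq_neg_sum_erase {m : Multiset ℕ} (hm : m ≠ 0) :
    signedPartitionTerm c m = -∑ i ∈ m.toFinset, c i * signedPartitionTerm c (m.erase i) := by
  rw [signedPartitionTerm, Multiset.countPerms_eq_sum_erase hm, Nat.cast_sum, mul_sum, sum_mul,
    ← sum_neg_distrib]
  refine sum_congr rfl fun i hi => ?_
  have hi : i ∈ m := Multiset.mem_toFinset.1 hi
  rw [signedPartitionTerm, ← Multiset.prod_map_erase hi, ← Multiset.card_erase_add_one hi]
  ring

theorem partitionInvCoeff_zero : partitionInvCoeff c 0 = 1 := by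
  simp [partitionInvCoeff, signedPartitionTerm, Unique.eq_default]

theorem partitionInvCoeff_eq_neg_sum {n : ℕ} (hn : 1 ≤ n) :
    partitionInvCoeff c n = -∑ i ∈ Icc 1 n, c i * partitionInvCoeff c (n - i) := by
  have hparts (p : n.Partition) : p.parts ≠ 0 := fun h => by
    have := p.parts_sum
    simp only [h, Multiset.sum_zero] at this
    omega
  simp only [partitionInvCoeff, mul_sum]
  rw [← Nat.Partition.sum_sum_erase_parts n (fun i m => c i * signedPartitionTerm c m),
    ← sum_neg_distrib]
  exact sum_congr rfl fun p _ => signedPartitionTerm_eq_neg_sum_erase c (hparts p)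

theorem PowerSeries.mk_mul_mk_partitionInvCoeff (hc : c 0 = 1) :
    PowerSeries.mk c * PowerSeries.mk (partitionInvCoeff c) = 1 := by
  ext n
  rw [PowerSeries.coeff_mul, Nat.sum_antidiagonal_eq_sum_range_succ_mk, PowerSeries.coeff_one]
  simp only [PowerSeries.coeff_mk]
  rcases Nat.eq_zero_or_pos n with rfl | hn
  · simp [hc, partitionInvCoeff_zero]
  · rw [range_eq_Ico, sum_eq_sum_Ico_succ_bot n.succ_pos, zero_add, Nat.succ_eq_add_one,
      Ico_add_one_right_eq_Icc, Nat.sub_zero, hc, one_mul,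
      partitionInvCoeff_eq_neg_sum c hn, if_neg hn.ne']
    simp

end

theorem stmt12_general {K : Type*} [Field K] [CharZero K]
    (a : ℕ → K) (ha : a 0 = 1)
    (B : PowerSeries K)
    (hAB : (PowerSeries.mk fun n => a n / (n.factorial : K)) * B = 1)
    (n : ℕ) :
    (n.factorial : K) * PowerSeries.coeff n B =
      ∑ p : Nat.Partition n,
        (-1 : K) ^ p.parts.card *
          ((n.factorial : K) / (((p.parts.map Nat.factorial).prod : ℕ) : K)) *
          (((p.parts.card.factorial : ℕ) : K) /
            (((∏ j ∈ Finset.range (n + 1), (p.parts.count j).factorial : ℕ) : K))) *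
          (p.parts.map a).prod := by
  have hB : B = PowerSeries.mk (partitionInvCoeff fun i => a i / (i.factorial : K)) :=
    left_inv_eq_right_inv (mul_comm B _ ▸ hAB)
      (PowerSeries.mk_mul_mk_partitionInvCoeff _ (by simp [ha]))
  rw [hB, PowerSeries.coeff_mk, partitionInvCoeff, mul_sum]
  refine sum_congr rfl fun p _ => ?_
  have hcount : (p.parts.countPerms : K) = (p.parts.card.factorial : K) /
      ((∏ j ∈ range (n + 1), (p.parts.count j).factorial : ℕ) : K) := by
    rw [eq_div_iff (Nat.cast_ne_zero.2 (prod_ne_zero_iff.2 fun _ _ => Nat.factorial_ne_zero _)),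
      ← Nat.cast_mul, Multiset.countPerms_mul_prod_factorial]
    exact fun j hj => mem_range_succ_iff.2 (p.le_of_mem_parts (Multiset.mem_toFinset.1 hj))
  rw [signedPartitionTerm, hcount, Multiset.prod_map_div, Nat.cast_multiset_prod, Multiset.map_map,
    Function.comp_def]
  ring

/-- Multiplicative inversion of exponential power series: if `A(x) = ∑ a_n x^n/n!` with
`a_0 = 1` and `A·B = 1`, then the coefficients `b_n = n!·[x^n]B` are given by the sum over
integer partitions `λ ⊢ n` of `(−1)^{k(λ)} · n!/∏ λᵢ! · k(λ)!/∏ mⱼ(λ)! · ∏ a_{λᵢ}`. -/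
theorem stmt12 {K : Type*} [Field K] [CharZero K]
    (a : ℕ → K) (ha : a 0 = 1)
    (B : PowerSeries K)
    (hAB : (PowerSeries.mk fun n => a n / (n.factorial : K)) * B = 1)
    (n : ℕ) (hn : 1 ≤ n) :
    (n.factorial : K) * PowerSeries.coeff n B =
      ∑ p : Nat.Partition n,
        (-1 : K) ^ p.parts.card *
          ((n.factorial : K) / (((p.parts.map Nat.factorial).prod : ℕ) : K)) *
          (((p.parts.card.factorial : ℕ) : K) /
            (((∏ j ∈ Finset.range (n + 1), (p.parts.count j).factorial : ℕ) : K))) *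
          (p.parts.map a).prod :=
  stmt12_general a ha B hAB n
end

section
/- Let 𝕂 be a field of characteristic zero and c : ℕ → 𝕂 with c(0) = 1. Let C = ∑_{n ≥ 1} c(n−1) x^n and let D = ∑_{n ≥ 1} d(n−1) x^n be a formal power series with zero constant term such that the substitution of D into C equals x (i.e. C(D(x)) = x). Then for every n ≥ 1, d(n) = ∑_{λ ⊢ n} (−1)^{k(λ)} · (n + k(λ))! / ((n+1)! · ∏_{j ≥ 1} m_j(λ)!) · ∏_i c(λ_i), where the sum is over all integer partitions λ of n, k(λ) is the number of parts of λ, λ_i are its parts, and m_j(λ) is the number of parts equal to j. -/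
/-!
Write `C = X·A` with `A = ∑ c_n Xⁿ`, so `D` is the compositional inverse of `C`. Then also
`D(C) = X`, and the chain rule gives `D'(C)·C' = 1`. Multiply by `A⁻ⁿ⁻¹` and take the coefficient
of `Xⁿ`: since `[X^q] C'·A^{-(q+1)} = δ_{q,0}` (the residue of `C'/C^{q+1}`, a derivative when
`q > 0`), only `[Xⁿ] D' = (n+1)·d_n` survives, which is Lagrange's `(n+1)·d_n = [Xⁿ] A^{-(n+1)}`.
Expanding `A^{-(n+1)} = (1 - (1 - A))^{-(n+1)}` binomially and each `(1 - A)^k` by the multinomial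
theorem indexes the terms by the partitions of `n` into `k` parts, with weight
`(n+k choose n)·k!/∏ m_j! = (n+1)·(n+k)!/((n+1)!·∏ m_j!)`.
-/

open Finset

theorem Multiset.prod_factorial_count_mul_countPerms {α : Type*} [DecidableEq α] (m : Multiset α) :
    (∏ a ∈ m.toFinset, (m.count a).factorial) * m.countPerms = (card m).factorial := by
  rw [countPerms, Finsupp.multinomial_eq, toFinsupp_support]
  simpa only [toFinsupp_apply, toFinset_sum_count_eq] using
    Nat.multinomial_spec m.toFinset m.toFinsupp

namespace Nat.Partition

theorem prod_factorial_count_mul_countPerms {n : ℕ} (p : n.Partition) :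
    (∏ j ∈ range (n + 1), (p.parts.count j).factorial) * p.parts.countPerms =
      (Multiset.card p.parts).factorial := by
  rw [← Multiset.prod_factorial_count_mul_countPerms]
  congr 1
  refine (prod_subset ?_ ?_).symm
  · exact fun j hj ↦ mem_range_succ_iff.mpr (p.le_of_mem_parts (Multiset.mem_toFinset.mp hj))
  · intro j _ hj
    rw [Multiset.count_eq_zero.mpr (mt Multiset.mem_toFinset.mpr hj), Nat.factorial_zero]

theorem sum_eq_sum_range_sum_sym {M : Type*} [AddCommMonoid M] (n : ℕ)
    (F : Multiset ℕ → M) :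
    ∑ p : n.Partition, F p.parts = ∑ k ∈ range (n + 1),
      ∑ m ∈ ((Icc 1 n).sym k).filter fun m : Sym ℕ k ↦ (m : Multiset ℕ).sum = n, F m := by
  rw [← sum_fiberwise_of_maps_to (g := fun p : n.Partition ↦ Multiset.card p.parts)
    (t := range (n + 1)) fun p _ ↦ mem_range_succ_iff.mpr ?_]
  · refine sum_congr rfl fun k _ ↦ ?_
    refine sum_bij' (fun p hp ↦ Sym.mk p.parts (mem_filter.mp hp).2)
      (fun m hm ↦ ⟨m, fun hi ↦ ?_, (mem_filter.mp hm).2⟩) ?_ ?_ ?_ ?_ ?_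
    · exact (mem_Icc.mp (mem_sym_iff.mp (mem_filter.mp hm).1 _ hi)).1
    · intro p hp
      exact mem_filter.mpr ⟨mem_sym_iff.mpr fun i hi ↦
        mem_Icc.mpr ⟨p.parts_pos hi, p.le_of_mem_parts hi⟩, p.parts_sum⟩
    · intro m hm
      simp
    all_goals exact fun _ _ ↦ rfl
  · simpa [p.parts_sum] using Multiset.card_nsmul_le_sum fun _ hi ↦ p.parts_pos hi

theorem cast_choose_mul_countPerms {K : Type*} [Field K] [CharZero K] {n : ℕ}
    (p : n.Partition) :
    ((n + Multiset.card p.parts).choose n * p.parts.countPerms : K) =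
      (n + 1) * ((n + Multiset.card p.parts).factorial /
        ((n + 1).factorial * (∏ j ∈ range (n + 1), (p.parts.count j).factorial : ℕ))) := by
  have hperm := p.prod_factorial_count_mul_countPerms
  generalize Multiset.card p.parts = k at hperm ⊢
  have hchoose := Nat.choose_mul_factorial_mul_factorial (Nat.le_add_right n k)
  rw [Nat.add_sub_cancel_left] at hchoose
  have hP : ((∏ j ∈ range (n + 1), (p.parts.count j).factorial : ℕ) : K) ≠ 0 :=
    Nat.cast_ne_zero.mpr (prod_ne_zero_iff.mpr fun j _ ↦ Nat.factorial_ne_zero _)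
  have hn : (n.factorial : K) ≠ 0 := Nat.cast_ne_zero.mpr (Nat.factorial_ne_zero n)
  rw [Nat.factorial_succ, ← hchoose, ← hperm]
  push_cast at hP ⊢
  field_simp

end Nat.Partition

namespace PowerSeries

section CommRing

variable {R : Type*} [CommRing R]

theorem coeff_pow_of_lt {g : R⟦X⟧} (hg : constantCoeff g = 0) {n k : ℕ} (h : n < k) :
    coeff n (g ^ k) = 0 :=
  X_pow_dvd_iff.mp (pow_dvd_pow_of_dvd (X_dvd_iff.mpr hg) k) n h

theorem coeff_subst_eq_sum_range {g : R⟦X⟧} (hg : constantCoeff g = 0) (f : R⟦X⟧) {n N : ℕ}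
    (hn : n ≤ N) : coeff n (subst g f) = ∑ k ∈ range (N + 1), coeff k f * coeff n (g ^ k) := by
  rw [coeff_subst' (HasSubst.of_constantCoeff_zero' hg)]
  refine finsum_eq_sum_of_support_subset _ fun k hk ↦ ?_
  by_contra hkN
  simp only [coe_range, Set.mem_Iio, not_lt] at hkN
  exact hk (by simp [coeff_pow_of_lt hg (show n < k by omega)])

theorem coeff_subst_mul {g : R⟦X⟧} (hg : constantCoeff g = 0) (f G : R⟦X⟧) (n : ℕ) :
    coeff n (subst g f * G) = ∑ k ∈ range (n + 1), coeff k f * coeff n (g ^ k * G) := by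
  simp_rw [coeff_mul, mul_sum]
  rw [sum_comm]
  refine sum_congr rfl fun p hp ↦ ?_
  rw [coeff_subst_eq_sum_range hg f (Nat.le_of_lt_succ (Nat.antidiagonal.fst_lt hp)), sum_mul]
  exact sum_congr rfl fun k _ ↦ mul_assoc _ _ _

theorem coeff_subst_X_mul_mk {g : R⟦X⟧} (hg : constantCoeff g = 0) (a : ℕ → R) (n : ℕ) :
    coeff n (subst g (X * mk a)) = ∑ k ∈ Icc 1 n, a (k - 1) * coeff n (g ^ k) := by
  rw [coeff_subst_eq_sum_range hg _ le_rfl, sum_range_succ', ← Ico_add_one_right_eq_Icc,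
    sum_Ico_eq_sum_range]
  simp [coeff_succ_X_mul, add_comm]

theorem subst_eq_X_of_subst_eq_X {f g : R⟦X⟧} (hf : constantCoeff f = 0)
    (hf₁ : IsUnit (coeff 1 f)) (hg : constantCoeff g = 0) (h : subst g f = X) : subst f g = X := by
  set Q := f.substInvOfIsUnit hf₁
  have hQ : subst f Q = X := subst_substInvOfIsUnit_left f hf hf₁
  have hgQ : g = Q := by
    calc g = subst g (subst f Q) := by rw [hQ, subst_X (HasSubst.of_constantCoeff_zero' hg)]
      _ = Q := by
          rw [subst_comp_subst_apply (HasSubst.of_constantCoeff_zero' hf)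
            (HasSubst.of_constantCoeff_zero' hg), h, X_subst]
  rw [hgQ, hQ]

theorem prod_map_monomial (m : Multiset ℕ) (a : ℕ → R) :
    (m.map fun j ↦ monomial j (a j)).prod = monomial m.sum (m.map a).prod := by
  induction m using Multiset.induction_on with
  | empty => simp
  | cons j m ih => simp [ih, monomial_mul_monomial]

theorem coeff_pow_eq_sum_sym {f : R⟦X⟧} (hf : constantCoeff f = 0) (n k : ℕ) :
    coeff n (f ^ k) = ∑ m ∈ ((Icc 1 n).sym k).filter fun m : Sym ℕ k ↦ (m : Multiset ℕ).sum = n,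
      ((m : Multiset ℕ).countPerms : R) * ((m : Multiset ℕ).map fun j ↦ coeff j f).prod := by
  set P := ∑ j ∈ Icc 1 n, monomial j (coeff j f)
  have hP : X ^ (n + 1) ∣ f - P := X_pow_dvd_iff.mpr fun i hi ↦ by
    rw [map_sub, map_sum]
    rcases Nat.eq_zero_or_pos i with rfl | hi₀
    · simp [coeff_monomial, hf]
    · simp [coeff_monomial, Nat.lt_succ_iff.mp hi, Nat.one_le_of_lt hi₀]
  have hPk := X_pow_dvd_iff.mp (hP.trans (sub_dvd_pow_sub_pow _ _ k)) n (lt_add_one n)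
  rw [map_sub, sub_eq_zero] at hPk
  rw [hPk, Finset.sum_pow, map_sum, sum_filter]
  refine sum_congr rfl fun m _ ↦ ?_
  rw [prod_map_monomial, ← map_natCast C, coeff_C_mul, coeff_monomial]
  by_cases hm : (m : Multiset ℕ).sum = n
  · simp [hm]
  · simp [hm, Ne.symm hm]

end CommRing

section Field

variable {K : Type*} [Field K]

theorem coeff_derivative_X_mul_mul_inv_pow [CharZero K] {A : K⟦X⟧} (hA : constantCoeff A ≠ 0)
    (q : ℕ) : coeff q (d⁄dX K (X * A) * A⁻¹ ^ (q + 1)) = if q = 0 then 1 else 0 := by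
  have hAB : A * A⁻¹ = 1 := PowerSeries.mul_inv_cancel A hA
  have hd : d⁄dX K (X * A) = A + X * d⁄dX K A := by
    simp [Derivation.leibniz]
    ring
  rcases q with _ | p
  · have : d⁄dX K (X * A) * A⁻¹ ^ 1 = 1 + X * (d⁄dX K A * A⁻¹) := by
      rw [hd, pow_one, add_mul, hAB]; ring
    rw [this]
    simp
  -- `(X·A)'·A^{-(p+2)} = A^{-(p+1)} - X·(A^{-(p+1)})'/(p+1)`, and `[X^{p+1}]` of the right side is
  -- `[X^{p+1}] A^{-(p+1)} - [X^p] (A^{-(p+1)})'/(p+1) = 0`.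
  · have hsplit : d⁄dX K (X * A) * A⁻¹ ^ (p + 2) =
        A⁻¹ ^ (p + 1) + X * (d⁄dX K A * A⁻¹ ^ (p + 2)) := by
      rw [hd, add_mul, pow_succ' _ (p + 1), ← mul_assoc, hAB, one_mul]; ring
    have hder : d⁄dX K (A⁻¹ ^ (p + 1)) = -((p + 1 : K) • (d⁄dX K A * A⁻¹ ^ (p + 2))) := by
      rw [derivative_pow, derivative_inv', Nat.add_sub_cancel, Algebra.smul_def]
      simp only [map_add, map_natCast, map_one]
      push_cast
      ring
    have hcoeff := coeff_derivative (A⁻¹ ^ (p + 1)) p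
    rw [hder] at hcoeff
    simp only [map_neg, map_smul, smul_eq_mul] at hcoeff
    have hp : (p + 1 : K) ≠ 0 := by exact_mod_cast p.succ_ne_zero
    rw [hsplit, map_add, coeff_succ_X_mul, if_neg p.succ_ne_zero]
    refine mul_left_cancel₀ hp ?_
    linear_combination -hcoeff

theorem coeff_X_mul_pow_mul_derivative_mul_inv_pow [CharZero K] {A : K⟦X⟧}
    (hA : constantCoeff A ≠ 0) {k n : ℕ} (hkn : k ≤ n) :
    coeff n ((X * A) ^ k * (d⁄dX K (X * A) * A⁻¹ ^ (n + 1))) = if k = n then 1 else 0 := by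
  have hshift : (X * A) ^ k * (d⁄dX K (X * A) * A⁻¹ ^ (n + 1)) =
      X ^ k * (A * A⁻¹) ^ k * (d⁄dX K (X * A) * A⁻¹ ^ (n - k + 1)) := by
    rw [show n + 1 = k + (n - k + 1) by omega, pow_add]
    ring
  rw [hshift, PowerSeries.mul_inv_cancel A hA, one_pow, mul_one, coeff_X_pow_mul', if_pos hkn,
    coeff_derivative_X_mul_mul_inv_pow hA]
  split_ifs <;> first | rfl | omega

theorem lagrange_inversion [CharZero K] {A D : K⟦X⟧} (hA : constantCoeff A ≠ 0)
    (hD : constantCoeff D = 0) (h : subst D (X * A) = X) (n : ℕ) :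
    (n + 1 : K) * coeff (n + 1) D = coeff n (A⁻¹ ^ (n + 1)) := by
  have hC : constantCoeff (X * A) = 0 := by simp
  have hC₁ : IsUnit (coeff 1 (X * A)) := by simpa [coeff_succ_X_mul] using hA.isUnit
  have hchain : subst (X * A) (d⁄dX K D) * d⁄dX K (X * A) = 1 := by
    rw [← derivative_subst (HasSubst.of_constantCoeff_zero' hC),
      subst_eq_X_of_subst_eq_X hC hC₁ hD h, derivative_X]
  calc (n + 1 : K) * coeff (n + 1) D = coeff n (d⁄dX K D) := by rw [coeff_derivative]; ring
    _ = ∑ k ∈ range (n + 1), coeff k (d⁄dX K D) *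
          coeff n ((X * A) ^ k * (d⁄dX K (X * A) * A⁻¹ ^ (n + 1))) := by
      rw [sum_congr rfl fun k hk ↦ by rw [coeff_X_mul_pow_mul_derivative_mul_inv_pow hA
        (Nat.le_of_lt_succ (mem_range.mp hk)), mul_ite, mul_one, mul_zero]]
      rw [sum_ite_eq', if_pos (self_mem_range_succ n)]
    _ = coeff n (subst (X * A) (d⁄dX K D) * (d⁄dX K (X * A) * A⁻¹ ^ (n + 1))) :=
      (coeff_subst_mul hC _ _ n).symm
    _ = coeff n (A⁻¹ ^ (n + 1)) := by rw [← mul_assoc, hchain, one_mul]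

theorem coeff_inv_pow_eq_sum_choose {A : K⟦X⟧} (hA : constantCoeff A = 1) (N n : ℕ) :
    coeff n (A⁻¹ ^ (N + 1)) =
      ∑ k ∈ range (n + 1), ((N + k).choose N : K) * coeff n ((1 - A) ^ k) := by
  have hu₀ : constantCoeff (1 - A) = 0 := by simp [hA]
  have hu : HasSubst (1 - A) := HasSubst.of_constantCoeff_zero' hu₀
  set S := subst (1 - A) (invOneSubPow K (N + 1)).val
  have hmul : S * A ^ (N + 1) = 1 := by
    have := congrArg (substAlgHom hu) (mk_add_choose_mul_one_sub_pow_eq_one (S := K) (d := N))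
    rwa [map_mul, map_pow, map_sub, map_one, coe_substAlgHom, subst_X hu, sub_sub_cancel] at this
  have hinv : A⁻¹ ^ (N + 1) = S := calc
    A⁻¹ ^ (N + 1) = A⁻¹ ^ (N + 1) * (S * A ^ (N + 1)) := by rw [hmul, mul_one]
    _ = S * (A * A⁻¹) ^ (N + 1) := by ring
    _ = S := by rw [PowerSeries.mul_inv_cancel A (by simp [hA]), one_pow, mul_one]
  rw [hinv, coeff_subst_eq_sum_range hu₀ _ le_rfl]
  simp [invOneSubPow_val_succ_eq_mk_add_choose]

theorem coeff_inv_pow_eq_sum_partition {A : K⟦X⟧} (hA : constantCoeff A = 1) (N n : ℕ) :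
    coeff n (A⁻¹ ^ (N + 1)) = ∑ p : n.Partition,
      ((N + Multiset.card p.parts).choose N * p.parts.countPerms : K) *
        (p.parts.map fun j ↦ -coeff j A).prod := by
  rw [coeff_inv_pow_eq_sum_choose hA, Nat.Partition.sum_eq_sum_range_sum_sym n fun m ↦
    ((N + Multiset.card m).choose N * m.countPerms : K) * (m.map fun j ↦ -coeff j A).prod]
  refine sum_congr rfl fun k _ ↦ ?_
  rw [coeff_pow_eq_sum_sym (by simp [hA]), mul_sum]
  refine sum_congr rfl fun m hm ↦ ?_
  have hpos : ∀ j ∈ (m : Multiset ℕ), j ≠ 0 := fun j hj ↦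
    Nat.one_le_iff_ne_zero.mp (mem_Icc.mp (mem_sym_iff.mp (mem_filter.mp hm).1 j hj)).1
  have hcoeff : (m : Multiset ℕ).map (fun j ↦ coeff j (1 - A)) =
      (m : Multiset ℕ).map fun j ↦ -coeff j A :=
    Multiset.map_congr rfl fun j hj ↦ by simp [coeff_one, hpos j hj]
  rw [hcoeff, Sym.card_coe]
  ring

end Field

end PowerSeries

theorem stmt13_general {K : Type*} [Field K] [CharZero K]
    (c d : ℕ → K) (hc : c 0 = 1)
    (hcomp : ∀ m : ℕ,
      (∑ k ∈ Finset.Icc 1 m,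
          c (k - 1) *
            PowerSeries.coeff m
              ((PowerSeries.mk fun n => if n = 0 then 0 else d (n - 1)) ^ k)) =
        PowerSeries.coeff m (PowerSeries.X : PowerSeries K))
    (n : ℕ) :
    d n =
      ∑ p : Nat.Partition n,
        (-1 : K) ^ p.parts.card *
          ((((n + p.parts.card).factorial : ℕ) : K) /
            (((n + 1).factorial : K) *
              (((∏ j ∈ Finset.range (n + 1), (p.parts.count j).factorial : ℕ) : K)))) *
          (p.parts.map c).prod := by
  open PowerSeries in
  set A : K⟦X⟧ := mk c
  set D : K⟦X⟧ := mk fun n ↦ if n = 0 then 0 else d (n - 1)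
  have hA : constantCoeff A = 1 := by simp [A, hc]
  have hD : constantCoeff D = 0 := by simp [D]
  have hsubst : subst D (X * A) = X := by
    ext m
    rw [coeff_subst_X_mul_mk hD, hcomp]
  have hlag := lagrange_inversion (by simp [hA]) hD hsubst n
  rw [coeff_inv_pow_eq_sum_partition hA, show coeff (n + 1) D = d n by simp [D]] at hlag
  refine mul_left_cancel₀ (Nat.cast_add_one_ne_zero n) (hlag.trans ?_)
  rw [mul_sum]
  refine sum_congr rfl fun p _ ↦ ?_
  have hneg : (p.parts.map fun j ↦ -coeff j A) = (p.parts.map c).map Neg.neg := by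
    simp [A, Multiset.map_map]
  rw [hneg, Multiset.prod_map_neg, Multiset.card_map, p.cast_choose_mul_countPerms]
  ring

/-- Lagrange inversion: if `C(x) = ∑_{n ≥ 1} c_{n−1} x^n` with `c_0 = 1` and
`D(x) = ∑_{n ≥ 1} d_{n−1} x^n` satisfies `C(D(x)) = x` (expressed coefficientwise: since `D`
has zero constant term, the coefficient of `x^m` in `C(D(x)) = ∑_{k ≥ 1} c_{k−1} D^k` is the
finite sum `∑_{k=1}^{m} c_{k−1}·[x^m](D^k)`), then for `n ≥ 1`,
`d_n = ∑_{λ ⊢ n} (−1)^{k(λ)} (n+k(λ))!/((n+1)!·∏ mⱼ(λ)!) · ∏ c_{λᵢ}`. -/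
theorem stmt13 {K : Type*} [Field K] [CharZero K]
    (c d : ℕ → K) (hc : c 0 = 1)
    (hcomp : ∀ m : ℕ,
      (∑ k ∈ Finset.Icc 1 m,
          c (k - 1) *
            PowerSeries.coeff m
              ((PowerSeries.mk fun n => if n = 0 then 0 else d (n - 1)) ^ k)) =
        PowerSeries.coeff m (PowerSeries.X : PowerSeries K))
    (n : ℕ) (hn : 1 ≤ n) :
    d n =
      ∑ p : Nat.Partition n,
        (-1 : K) ^ p.parts.card *
          ((((n + p.parts.card).factorial : ℕ) : K) /
            (((n + 1).factorial : K) *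
              (((∏ j ∈ Finset.range (n + 1), (p.parts.count j).factorial : ℕ) : K)))) *
          (p.parts.map c).prod :=
  stmt13_general c d hc hcomp n
end

section
/- Let I be a finite set with |I| = m, and let π_I ⊆ ℝ^I denote the standard permutahedron, the convex hull of all vectors x : I → ℝ that are bijections from I onto {1, …, m}. Let I = S ⊔ T be a partition of I into two disjoint subsets. Then the set of points of π_I maximizing the functional x ↦ ∑_{s ∈ S} x(s) equals {x : I → ℝ | the function s ↦ x(s) − |T| on S lies in π_S, and the restriction of x to T lies in π_T}, where π_S ⊆ ℝ^S and π_T ⊆ ℝ^T are the standard permutahedra of S and T. -/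
/-!
On a vertex `σ + 1` of `π_I` the functional `∑_{s ∈ S} x s` equals a constant minus
`∑_{t ∈ T} σ t`, a sum of `|T|` distinct naturals. Such a sum is at least `0 + 1 + ⋯ + (|T| - 1)`,
with equality exactly when `σ` maps `T` onto `{0, …, |T| - 1}` (and hence `S` onto the values
above). These maximizing vertices are exactly the gluings of a vertex of `π_T` with a vertex of
`π_S` shifted by `|T|`, i.e. the preimage of the vertices of `π_S × π_T` under the affine
isomorphism `x ↦ (x|_S - |T|, x|_T)`. The maximizers of a linear functional on a convex hull are
the convex hull of the maximizing points, and affine isomorphisms commute with convex hulls.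
-/

open Finset

/-- The standard permutahedron of a finite type `α`: the convex hull of the vectors whose
coordinates read a bijection `α → {1, …, |α|}`. -/
def permPoly (α : Type*) [Fintype α] [DecidableEq α] : Set (α → ℝ) :=
  convexHull ℝ
    {x : α → ℝ | ∃ σ : α ≃ Fin (Fintype.card α), ∀ i : α, x i = ((σ i : ℕ) : ℝ) + 1}

namespace Finset

/-- The elements of `C` outside `range #C` are at least `#C`, the equally many elements of
`range #C` missing from `C` are below `#C`. -/
theorem sum_range_card_add_card_sdiff_le (C : Finset ℕ) :
    ∑ i ∈ range #C, i + #(C \ range #C) ≤ ∑ c ∈ C, c := by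
  set R := range #C
  have hcard : #(R \ C) = #(C \ R) := card_sdiff_comm (card_range _)
  calc ∑ i ∈ R, i + #(C \ R) = ∑ i ∈ R ∩ C, i + ∑ i ∈ R \ C, (i + 1) := by
        rw [sum_add_distrib, ← hcard, card_eq_sum_ones (R \ C), ← add_assoc,
          sum_inter_add_sum_sdiff]
    _ ≤ ∑ c ∈ C ∩ R, c + #(C \ R) • #C := by
        rw [inter_comm, ← hcard]
        gcongr
        exact sum_le_card_nsmul _ _ _ fun i hi => by simp [R] at hi; omega
    _ ≤ ∑ c ∈ C ∩ R, c + ∑ c ∈ C \ R, c := by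
        gcongr
        exact card_nsmul_le_sum _ _ _ fun c hc => by simp [R] at hc; omega
    _ = ∑ c ∈ C, c := sum_inter_add_sum_sdiff C R _

variable {α : Type*} {T : Finset α} {g : α → ℕ}

theorem image_eq_range_card_of_forall_lt (hg : Set.InjOn g T) (hlt : ∀ t ∈ T, g t < #T) :
    T.image g = range #T :=
  eq_of_subset_of_card_le
    (fun _ hc => by obtain ⟨t, ht, rfl⟩ := mem_image.1 hc; simpa using hlt t ht)
    (by rw [card_range, card_image_of_injOn hg])

theorem sum_range_card_le_sum_of_injOn (hg : Set.InjOn g T) :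
    ∑ i ∈ range #T, i ≤ ∑ t ∈ T, g t := by
  have := sum_range_card_add_card_sdiff_le (T.image g)
  rw [card_image_of_injOn hg, sum_image hg] at this
  omega

theorem sum_eq_sum_range_card_iff (hg : Set.InjOn g T) :
    ∑ t ∈ T, g t = ∑ i ∈ range #T, i ↔ ∀ t ∈ T, g t < #T := by
  refine ⟨fun h t ht => ?_, fun hlt => ?_⟩
  · have := sum_range_card_add_card_sdiff_le (T.image g)
    rw [card_image_of_injOn hg, sum_image hg, h, add_le_iff_nonpos_right, Nat.le_zero,
      card_eq_zero, sdiff_eq_empty_iff_subset] at this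
    simpa using this (mem_image_of_mem g ht)
  · rw [← image_eq_range_card_of_forall_lt hg hlt, sum_image hg]

end Finset

section Convex

variable {E F : Type*} [AddCommGroup E] [Module ℝ E] [AddCommGroup F] [Module ℝ F]

theorem convexHull_inter_eq_convexHull_of_le (s : Set E) (f : E →ₗ[ℝ] ℝ) {M : ℝ}
    (hle : ∀ v ∈ s, f v ≤ M) :
    convexHull ℝ s ∩ {x | f x = M} = convexHull ℝ {v ∈ s | f v = M} := by
  refine subset_antisymm ?_ (Set.subset_inter (convexHull_mono fun v hv => hv.1)
    (convexHull_min (fun v hv => hv.2) (convex_hyperplane f.isLinear M)))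
  rintro x ⟨hx, hfx⟩
  obtain ⟨ι, _, w, z, hw₀, hw₁, hz, rfl⟩ := mem_convexHull_iff_exists_fintype.1 hx
  -- `∑ wᵢ (M - f zᵢ) = M - f x = 0` is a sum of nonnegative terms
  have hterm : ∀ i, w i * (M - f (z i)) = 0 := by
    have hsum : ∑ i, w i * (M - f (z i)) = 0 := by
      simp only [Set.mem_ofPred_eq, map_sum, map_smul, smul_eq_mul] at hfx
      simp only [mul_sub, sum_sub_distrib, ← sum_mul, hw₁, one_mul, hfx, sub_self]
    exact fun i => (sum_eq_zero_iff_of_nonneg fun i _ =>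
      mul_nonneg (hw₀ i) (sub_nonneg.2 (hle _ (hz i)))).1 hsum i (mem_univ i)
  classical
  rw [← centerMass_eq_of_sum_1 _ _ hw₁, ← centerMass_filter_ne_zero]
  refine centerMass_mem_convexHull _ (fun i _ => hw₀ i)
    (by rw [sum_filter_ne_zero, hw₁]; exact one_pos) fun i hi => ⟨hz i, ?_⟩
  have := hterm i
  simp only [mul_eq_zero, (mem_filter.1 hi).2, false_or, sub_eq_zero] at this
  exact this.symm

theorem setOf_maximizers_convexHull_eq (s : Set E) (f : E →ₗ[ℝ] ℝ) {M : ℝ}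
    (hle : ∀ v ∈ s, f v ≤ M) (hM : ∃ v ∈ s, f v = M) :
    {x ∈ convexHull ℝ s | ∀ w ∈ convexHull ℝ s, f w ≤ f x} =
      convexHull ℝ {v ∈ s | f v = M} := by
  have hle' : ∀ w ∈ convexHull ℝ s, f w ≤ M :=
    fun w hw => convexHull_min hle (convex_halfSpace_le f.isLinear M) hw
  obtain ⟨v, hv, hfv⟩ := hM
  rw [← convexHull_inter_eq_convexHull_of_le s f hle]
  ext x
  simp only [Set.mem_ofPred_eq, Set.mem_inter_iff]
  refine and_congr_right fun hx =>
    ⟨fun h => le_antisymm (hle' x hx) ?_, fun h w hw => h ▸ hle' w hw⟩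
  exact hfv ▸ h v (subset_convexHull ℝ s hv)

theorem AffineEquiv.preimage_convexHull (e : E ≃ᵃ[ℝ] F) (s : Set F) :
    e ⁻¹' convexHull ℝ s = convexHull ℝ (e ⁻¹' s) := by
  rw [← e.image_symm, ← e.image_symm]
  exact e.symm.toAffineMap.image_convexHull s

end Convex

theorem Equiv.injective_val_apply {α : Type*} {n : ℕ} (σ : α ≃ Fin n) :
    Function.Injective fun i => (σ i : ℕ) :=
  Fin.val_injective.comp σ.injective

theorem exists_equiv_fin_of_injective {α : Type*} [Fintype α] {g : α → ℕ}
    (hg : Function.Injective g) (hlt : ∀ a, g a < Fintype.card α) :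
    ∃ e : α ≃ Fin (Fintype.card α), ∀ a, (e a : ℕ) = g a :=
  ⟨Equiv.ofBijective (fun a => ⟨g a, hlt a⟩) ((Fintype.bijective_iff_injective_and_card _).2
    ⟨fun _ _ h => hg (congrArg Fin.val h), (Fintype.card_fin _).symm⟩), fun _ => rfl⟩

theorem le_val_of_forall_lt {α : Type*} {n : ℕ} {T : Finset α} (σ : α ≃ Fin n)
    (hlow : ∀ t ∈ T, (σ t : ℕ) < #T) {i : α} (hi : i ∉ T) : #T ≤ σ i := by
  by_contra! h
  rw [← mem_range, ← image_eq_range_card_of_forall_lt σ.injective_val_apply.injOn hlow] at h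
  obtain ⟨t, ht, hti⟩ := mem_image.1 h
  exact hi (σ.injective (Fin.val_injective hti) ▸ ht)

def permVertices (α : Type*) [Fintype α] : Set (α → ℝ) :=
  {x | ∃ σ : α ≃ Fin (Fintype.card α), ∀ i, x i = ((σ i : ℕ) : ℝ) + 1}

theorem permPoly_eq_convexHull (α : Type*) [Fintype α] [DecidableEq α] :
    permPoly α = convexHull ℝ (permVertices α) :=
  rfl

section Partition

variable {I : Type*} [Fintype I] [DecidableEq I] {S T : Finset I}

def sumEquivOfPartition (hST : Disjoint S T) (hUnion : S ∪ T = univ) : ↥S ⊕ ↥T ≃ I :=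
  (Equiv.Finset.union S T hST).trans (Equiv.subtypeUnivEquiv fun i => hUnion ▸ mem_univ i)

def restrictSubAffineEquiv (hST : Disjoint S T) (hUnion : S ∪ T = univ) (c : ℝ) :
    (I → ℝ) ≃ᵃ[ℝ] (↥S → ℝ) × (↥T → ℝ) :=
  ((LinearEquiv.funCongrLeft ℝ ℝ (sumEquivOfPartition hST hUnion)).trans
    (LinearEquiv.sumArrowLequivProdArrow ↥S ↥T ℝ ℝ)).toAffineEquiv.trans
    (AffineEquiv.constVAdd ℝ _ (fun _ => -c, 0))

theorem restrictSubAffineEquiv_apply (hST : Disjoint S T) (hUnion : S ∪ T = univ) (c : ℝ)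
    (x : I → ℝ) :
    restrictSubAffineEquiv hST hUnion c x = (fun s : ↥S => x s - c, fun t : ↥T => x t) := by
  ext <;> simp [restrictSubAffineEquiv, sumEquivOfPartition, sub_eq_neg_add]

theorem card_add_card_of_partition (hST : Disjoint S T) (hUnion : S ∪ T = univ) :
    #S + #T = Fintype.card I := by
  rw [← card_union_of_disjoint hST, hUnion, card_univ]

theorem sum_val_add_sum_val (hST : Disjoint S T) (hUnion : S ∪ T = univ)
    (σ : I ≃ Fin (Fintype.card I)) :
    ∑ i ∈ S, (σ i : ℕ) + ∑ i ∈ T, (σ i : ℕ) = ∑ j : Fin (Fintype.card I), (j : ℕ) := by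
  rw [← sum_union hST, hUnion]
  exact Equiv.sum_comp σ _

theorem sum_val_le_of_forall_lt (hST : Disjoint S T) (hUnion : S ∪ T = univ)
    (σ τ : I ≃ Fin (Fintype.card I)) (hτ : ∀ t ∈ T, (τ t : ℕ) < #T) :
    ∑ i ∈ S, (σ i : ℕ) ≤ ∑ i ∈ S, (τ i : ℕ) := by
  have hσ := sum_val_add_sum_val hST hUnion σ
  have hτ' := sum_val_add_sum_val hST hUnion τ
  have := sum_range_card_le_sum_of_injOn (σ.injective_val_apply.injOn (s := T))
  rw [(sum_eq_sum_range_card_iff τ.injective_val_apply.injOn).2 hτ] at hτ'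
  omega

theorem sum_val_eq_iff (hST : Disjoint S T) (hUnion : S ∪ T = univ)
    (σ τ : I ≃ Fin (Fintype.card I)) (hτ : ∀ t ∈ T, (τ t : ℕ) < #T) :
    ∑ i ∈ S, (σ i : ℕ) = ∑ i ∈ S, (τ i : ℕ) ↔ ∀ t ∈ T, (σ t : ℕ) < #T := by
  have hσ := sum_val_add_sum_val hST hUnion σ
  have hτ' := sum_val_add_sum_val hST hUnion τ
  rw [← sum_eq_sum_range_card_iff σ.injective_val_apply.injOn]
  rw [(sum_eq_sum_range_card_iff τ.injective_val_apply.injOn).2 hτ] at hτ'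
  omega

theorem exists_equiv_of_partition (hST : Disjoint S T) (hUnion : S ∪ T = univ)
    (α : ↥S ≃ Fin (Fintype.card ↥S)) (β : ↥T ≃ Fin (Fintype.card ↥T)) :
    ∃ σ : I ≃ Fin (Fintype.card I),
      (∀ s : ↥S, (σ s : ℕ) = #T + α s) ∧ ∀ t : ↥T, (σ t : ℕ) = β t := by
  have hcard : Fintype.card ↥T + Fintype.card ↥S = Fintype.card I := by
    rw [Fintype.card_coe, Fintype.card_coe, add_comm, card_add_card_of_partition hST hUnion]
  let P := sumEquivOfPartition hST hUnion
  refine ⟨P.symm.trans (((α.sumCongr β).trans (Equiv.sumComm _ _)).trans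
    (finSumFinEquiv.trans (finCongr hcard))), fun s => ?_, fun t => ?_⟩
  · have : P.symm s = Sum.inl s := P.symm_apply_eq.2 rfl
    simp [this]
  · have : P.symm t = Sum.inr t := P.symm_apply_eq.2 rfl
    simp [this]

theorem exists_equiv_forall_lt (hST : Disjoint S T) (hUnion : S ∪ T = univ) :
    ∃ σ : I ≃ Fin (Fintype.card I), ∀ t ∈ T, (σ t : ℕ) < #T := by
  obtain ⟨σ, -, hσ⟩ :=
    exists_equiv_of_partition hST hUnion (Fintype.equivFin _) (Fintype.equivFin _)
  exact ⟨σ, fun t ht => by simpa [hσ ⟨t, ht⟩] using (Fintype.equivFin ↥T ⟨t, ht⟩).isLt⟩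

theorem restrict_mem_permVertices_iff (hST : Disjoint S T) (hUnion : S ∪ T = univ)
    (x : I → ℝ) :
    ((fun s : ↥S => x s - (#T : ℝ)) ∈ permVertices ↥S ∧ (fun t : ↥T => x t) ∈ permVertices ↥T) ↔
      ∃ σ : I ≃ Fin (Fintype.card I), (∀ i, x i = ((σ i : ℕ) : ℝ) + 1) ∧
        ∀ t ∈ T, (σ t : ℕ) < #T := by
  constructor
  · rintro ⟨⟨α, hα⟩, ⟨β, hβ⟩⟩
    obtain ⟨σ, hσS, hσT⟩ := exists_equiv_of_partition hST hUnion α β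
    refine ⟨σ, fun i => ?_, fun t ht => ?_⟩
    · rcases mem_union.1 (hUnion ▸ mem_univ i : i ∈ S ∪ T) with hi | hi
      · have := hα ⟨i, hi⟩
        rw [hσS ⟨i, hi⟩]
        push_cast
        linarith
      · rw [hσT ⟨i, hi⟩]
        exact hβ ⟨i, hi⟩
    · simpa [hσT ⟨t, ht⟩] using (β ⟨t, ht⟩).isLt
  · rintro ⟨σ, hx, hlow⟩
    have hhigh : ∀ s ∈ S, #T ≤ (σ s : ℕ) :=
      fun s hs => le_val_of_forall_lt σ hlow (disjoint_left.1 hST hs)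
    have hcard := card_add_card_of_partition hST hUnion
    obtain ⟨α, hα⟩ := exists_equiv_fin_of_injective (g := fun s : ↥S => (σ s : ℕ) - #T)
      (fun s s' h => by
        have := hhigh s s.2
        have := hhigh s' s'.2
        exact Subtype.ext (σ.injective (Fin.ext (by simp only at h; omega))))
      (fun s => by
        have := (σ s).isLt
        have := hhigh s s.2
        rw [Fintype.card_coe]
        omega)
    obtain ⟨β, hβ⟩ := exists_equiv_fin_of_injective (g := fun t : ↥T => (σ t : ℕ))
      (fun t t' h => Subtype.ext (σ.injective (Fin.ext h)))
      (fun t => by rw [Fintype.card_coe]; exact hlow t t.2)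
    refine ⟨⟨α, fun s => ?_⟩, ⟨β, fun t => ?_⟩⟩
    · dsimp only
      rw [hα, hx, Nat.cast_sub (hhigh s s.2)]
      ring
    · dsimp only
      rw [hβ, hx]

theorem sum_le_of_mem_permVertices (hST : Disjoint S T) (hUnion : S ∪ T = univ)
    {τ : I ≃ Fin (Fintype.card I)} (hτ : ∀ t ∈ T, (τ t : ℕ) < #T) :
    ∀ v ∈ permVertices I, ∑ i ∈ S, v i ≤ ∑ i ∈ S, (((τ i : ℕ) : ℝ) + 1) := by
  rintro v ⟨σ, hv⟩
  simp only [hv, sum_add_distrib, add_le_add_iff_right]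
  exact_mod_cast sum_val_le_of_forall_lt hST hUnion σ τ hτ

theorem setOf_mem_permVertices_sum_eq (hST : Disjoint S T) (hUnion : S ∪ T = univ)
    {τ : I ≃ Fin (Fintype.card I)} (hτ : ∀ t ∈ T, (τ t : ℕ) < #T) :
    {v ∈ permVertices I | ∑ i ∈ S, v i = ∑ i ∈ S, (((τ i : ℕ) : ℝ) + 1)} =
      restrictSubAffineEquiv hST hUnion #T ⁻¹' (permVertices ↥S ×ˢ permVertices ↥T) := by
  ext v
  rw [Set.mem_preimage, restrictSubAffineEquiv_apply, Set.mem_prod,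
    restrict_mem_permVertices_iff hST hUnion]
  constructor
  · rintro ⟨⟨σ, hv⟩, hsum⟩
    refine ⟨σ, hv, (sum_val_eq_iff hST hUnion σ τ hτ).1 ?_⟩
    simp only [hv, sum_add_distrib, add_left_inj] at hsum
    exact_mod_cast hsum
  · rintro ⟨σ, hv, hσ⟩
    refine ⟨⟨σ, hv⟩, ?_⟩
    simp only [hv, sum_add_distrib, add_left_inj]
    exact_mod_cast (sum_val_eq_iff hST hUnion σ τ hτ).2 hσ

end Partition

/-- The face of the standard permutahedron `π_I` maximizing `x ↦ ∑_{s ∈ S} x s`, for a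
partition `I = S ⊔ T`, is described by: `(x s − |T|)_{s ∈ S}` lies in `π_S` and
`(x t)_{t ∈ T}` lies in `π_T`. -/
theorem stmt17 {I : Type*} [Fintype I] [DecidableEq I]
    (S T : Finset I) (hST : Disjoint S T) (hUnion : S ∪ T = Finset.univ) :
    {x ∈ permPoly I | ∀ w ∈ permPoly I, (∑ s ∈ S, w s) ≤ ∑ s ∈ S, x s} =
      {x : I → ℝ | (fun s : ↥S => x s - (T.card : ℝ)) ∈ permPoly ↥S ∧
        (fun t : ↥T => x t) ∈ permPoly ↥T} := by
  obtain ⟨τ, hτ⟩ := exists_equiv_forall_lt hST hUnion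
  let f : (I → ℝ) →ₗ[ℝ] ℝ := ∑ i ∈ S, LinearMap.proj i
  have hf : ∀ x, f x = ∑ i ∈ S, x i := fun x => by simp [f]
  have hmax := setOf_maximizers_convexHull_eq (permVertices I) f
    (by simpa only [hf] using sum_le_of_mem_permVertices hST hUnion hτ)
    ⟨_, ⟨τ, fun _ => rfl⟩, hf _⟩
  simp only [hf] at hmax
  simp only [permPoly_eq_convexHull]
  rw [hmax, setOf_mem_permVertices_sum_eq hST hUnion hτ,
    ← AffineEquiv.preimage_convexHull, convexHull_prod]
  ext x
  rw [Set.mem_preimage, restrictSubAffineEquiv_apply]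
  rfl
end

section
/- Let I be a nonempty finite set and π a set partition of I. For S ⊆ I let π|_S denote the set partition of S whose blocks are the nonempty intersections p ∩ S for blocks p of π. For an ordered set partition (S_1, …, S_k) of I, let τ(S_1, …, S_k) be the set partition of I whose blocks are all the blocks of π|_{S_1}, …, π|_{S_k}. Then in the free ℤ-module on the set of set partitions of I, ∑ (−1)^k · [τ(S_1, …, S_k)], the sum over all ordered set partitions (S_1, …, S_k) of I, equals ∑_ρ (−1)^{b(ρ)} · (∏_{p ∈ π} n_p(ρ)!) · [ρ], where the sum is over all set partitions ρ of I refining π (every block of ρ is contained in a block of π), b(ρ) is the number of blocks of ρ, and n_p(ρ) is the number of blocks of ρ contained in the block p of π. -/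
/-!
Compare the coefficients of a set partition `ρ`. Every `τ(C)` refines `π`, and for a refinement
`ρ` we have `τ(C) = ρ` exactly when `C i = ⋃ D i` for an ordered partition `D` of the set of
blocks of `ρ` in which no `D i` contains two blocks lying in the same block of `π`. So the
coefficient of `ρ` is `∑ₖ (-1)ᵏ` times the number of ordered partitions of `ρ` into `k` parts on
each of which the map `g`, sending a block of `ρ` to the block of `π` containing it, is injective.

For any map `g` on a finite set `s` this alternating count `a(s)` equals `(-1)^|s| ∏ₚ |g⁻¹ p|!`.
Splitting off the first part `t` gives `a(s) = -∑ₜ a(s \ t)` over the nonempty `t ⊆ s` on which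
`g` is injective. There are `∏_{p ∈ u} |g⁻¹ p|` such `t` with image `u`, and with these counts
the induction step reduces to `∑_{u ⊆ g(s)} (-1)^|u| = 0`.
-/

open Finset

/-- A finset of finsets is a set partition of the (finite) ambient type: its blocks are
nonempty, pairwise disjoint, and their union is everything. -/
def IsSetPartition {I : Type*} [Fintype I] [DecidableEq I] (π : Finset (Finset I)) : Prop :=
  (∀ p ∈ π, p.Nonempty) ∧ (∀ p ∈ π, ∀ q ∈ π, p ≠ q → Disjoint p q) ∧
    π.biUnion id = Finset.univ

open scoped Nat

section OrderedPartition

variable {α β : Type*} [DecidableEq α]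

def IsOrderedPartition (s : Finset α) {k : ℕ} (C : Fin k → Finset α) : Prop :=
  (∀ i, (C i).Nonempty) ∧ (∀ i j, i ≠ j → Disjoint (C i) (C j)) ∧ univ.biUnion C = s

instance (s : Finset α) (k : ℕ) : DecidablePred (IsOrderedPartition s (k := k)) :=
  fun _ => inferInstanceAs (Decidable (_ ∧ _ ∧ _))

theorem isOrderedPartition_zero_iff {s : Finset α} {C : Fin 0 → Finset α} :
    IsOrderedPartition s C ↔ s = ∅ := by
  simp [IsOrderedPartition, eq_comm]

theorem isOrderedPartition_succ_iff {s : Finset α} {k : ℕ} {C : Fin (k + 1) → Finset α} :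
    IsOrderedPartition s C ↔
      (C 0).Nonempty ∧ C 0 ⊆ s ∧ IsOrderedPartition (s \ C 0) (Fin.tail C) := by
  have hunion : univ.biUnion C = C 0 ∪ univ.biUnion (Fin.tail C) := by
    ext x; simp [Fin.exists_fin_succ, Fin.tail]
  have hdisj : (∀ i j, i ≠ j → Disjoint (C i) (C j)) ↔
      Disjoint (C 0) (univ.biUnion (Fin.tail C)) ∧
        ∀ i j, i ≠ j → Disjoint (Fin.tail C i) (Fin.tail C j) := by
    simp only [disjoint_biUnion_right, mem_univ, true_imp_iff]
    refine ⟨fun h => ⟨fun j => h 0 j.succ (Fin.succ_ne_zero j).symm,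
      fun i j hij => h i.succ j.succ (Fin.succ_injective _ |>.ne hij)⟩, ?_⟩
    rintro ⟨h0, h⟩ i j hij
    cases i using Fin.cases <;> cases j using Fin.cases
    · exact absurd rfl hij
    · exact h0 _
    · exact (h0 _).symm
    · exact h _ _ (ne_of_apply_ne Fin.succ hij)
  rw [IsOrderedPartition, IsOrderedPartition, hdisj, hunion, Fin.forall_fin_succ]
  constructor
  · rintro ⟨⟨hne, hall⟩, ⟨hd0, hd⟩, hs⟩
    exact ⟨hne, hs ▸ subset_union_left, hall, hd, (hd0.sdiff_eq_of_sup_eq hs).symm⟩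
  · rintro ⟨hne, hsub, hall, hd, hU⟩
    exact ⟨⟨hne, hall⟩, ⟨hU ▸ disjoint_sdiff, hd⟩, hU ▸ union_sdiff_of_subset hsub⟩

namespace IsOrderedPartition

variable {s : Finset α} {k : ℕ} {C : Fin k → Finset α}

theorem subset (hC : IsOrderedPartition s C) (i : Fin k) : C i ⊆ s :=
  hC.2.2 ▸ subset_biUnion_of_mem C (mem_univ i)

theorem exists_mem (hC : IsOrderedPartition s C) {x : α} (hx : x ∈ s) : ∃ i, x ∈ C i := by
  simpa [← hC.2.2] using hx

theorem eq_of_mem (hC : IsOrderedPartition s C) {x : α} {i j : Fin k} (hi : x ∈ C i)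
    (hj : x ∈ C j) : i = j := by
  by_contra h
  exact disjoint_left.1 (hC.2.1 i j h) hi hj

end IsOrderedPartition

variable [Fintype α] [DecidableEq β]

def orderedPartitionsInjOn (g : α → β) (s : Finset α) (k : ℕ) : Finset (Fin k → Finset α) :=
  {C | IsOrderedPartition s C ∧ ∀ i, Set.InjOn g (C i)}

theorem mem_orderedPartitionsInjOn {g : α → β} {s : Finset α} {k : ℕ} {C : Fin k → Finset α} :
    C ∈ orderedPartitionsInjOn g s k ↔ IsOrderedPartition s C ∧ ∀ i, Set.InjOn g (C i) := by
  simp [orderedPartitionsInjOn]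

theorem card_orderedPartitionsInjOn_zero (g : α → β) (s : Finset α) :
    #(orderedPartitionsInjOn g s 0) = if s = ∅ then 1 else 0 := by
  split_ifs with hs <;> simp [orderedPartitionsInjOn, isOrderedPartition_zero_iff, hs]

theorem card_orderedPartitionsInjOn_succ (g : α → β) (s : Finset α) (k : ℕ) :
    #(orderedPartitionsInjOn g s (k + 1)) =
      ∑ t ∈ s.powerset.filter fun t : Finset α => Set.InjOn g ↑t ∧ t.Nonempty,
         #(orderedPartitionsInjOn g (s \ t) k) := by
  rw [card_eq_sum_card_fiberwise (f := fun C => C 0)]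
  · refine sum_congr rfl fun t ht => ?_
    simp only [mem_filter, mem_powerset] at ht
    refine card_nbij' Fin.tail (Fin.cons (α := fun _ => Finset α) t) ?_ ?_ ?_ ?_
    · intro C hC
      simp only [coe_filter, Set.mem_ofPred_eq, mem_orderedPartitionsInjOn,
        isOrderedPartition_succ_iff, Fin.forall_fin_succ] at hC
      obtain ⟨⟨⟨-, -, hC⟩, -, hinj⟩, rfl⟩ := hC
      exact mem_orderedPartitionsInjOn.2 ⟨hC, hinj⟩
    · intro D hD
      obtain ⟨hD, hinj⟩ := mem_orderedPartitionsInjOn.1 hD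
      simp only [coe_filter, Set.mem_ofPred_eq, mem_orderedPartitionsInjOn,
        isOrderedPartition_succ_iff, Fin.forall_fin_succ, Fin.cons_zero, Fin.tail_cons,
        Fin.cons_succ]
      exact ⟨⟨⟨ht.2.2, ht.1, hD⟩, ht.2.1, hinj⟩, trivial⟩
    · intro C hC
      simp only [coe_filter, Set.mem_ofPred_eq] at hC
      rw [← hC.2, Fin.cons_self_tail]
    · intro D _
      exact Fin.tail_cons _ _
  · intro C hC
    obtain ⟨hC, hinj⟩ := mem_orderedPartitionsInjOn.1 hC
    obtain ⟨hne, hsub, -⟩ := isOrderedPartition_succ_iff.1 hC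
    simp only [coe_filter, mem_powerset, Set.mem_ofPred_eq]
    exact ⟨hsub, hinj 0, hne⟩

end OrderedPartition

section Transversals

variable {α β : Type*} [DecidableEq β]

theorem prod_mul_prod_factorial_sub_ite {u T : Finset β} (n : β → ℕ) (hu : u ⊆ T)
    (hn : ∀ p ∈ u, n p ≠ 0) :
    (∏ p ∈ u, n p) * ∏ p ∈ T, (n p - if p ∈ u then 1 else 0)! = ∏ p ∈ T, (n p)! := by
  have hprod : ∏ p ∈ u, n p = ∏ p ∈ T, if p ∈ u then n p else 1 := by
    rw [prod_ite_mem, inter_eq_right.2 hu]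
  rw [hprod, ← prod_mul_distrib]
  refine prod_congr rfl fun p _ => ?_
  split_ifs with hp
  · exact Nat.mul_factorial_pred (hn p hp)
  · rw [one_mul, Nat.sub_zero]

variable (g : α → β)

theorem card_filter_eq_ite_of_injOn {t : Finset α} (ht : Set.InjOn g ↑t) (p : β) :
    #(t.filter (g · = p)) = if p ∈ t.image g then 1 else 0 := by
  split_ifs with hp
  · obtain ⟨x, hx, rfl⟩ := mem_image.1 hp
    refine card_eq_one.2 ⟨x, eq_singleton_iff_unique_mem.2 ⟨mem_filter.2 ⟨hx, rfl⟩, ?_⟩⟩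
    exact fun y hy => ht (mem_filter.1 hy).1 hx (mem_filter.1 hy).2
  · exact card_eq_zero.2 (filter_eq_empty_iff.2 fun x hx hgx => hp (mem_image.2 ⟨x, hx, hgx⟩))

variable [DecidableEq α]

theorem card_powerset_filter_injOn_image_eq (s : Finset α) (u : Finset β) :
    #(s.powerset.filter fun t : Finset α => Set.InjOn g ↑t ∧ t.image g = u) =
      ∏ p ∈ u, #(s.filter (g · = p)) := by
  induction u using Finset.induction_on with
  | empty =>
    rw [prod_empty, card_eq_one]
    refine ⟨∅, eq_singleton_iff_unique_mem.2 ⟨by simp, fun t ht => ?_⟩⟩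
    exact image_eq_empty.1 (mem_filter.1 ht).2.2
  | @insert p u hpu ih =>
    have hset : s.powerset.filter (fun t : Finset α => Set.InjOn g ↑t ∧ t.image g = insert p u) =
        (s.filter (g · = p) ×ˢ s.powerset.filter fun t : Finset α =>
          Set.InjOn g ↑t ∧ t.image g = u).image fun xt => insert xt.1 xt.2 := by
      ext t
      simp only [mem_filter, mem_powerset, mem_image, mem_product, Prod.exists]
      constructor
      · rintro ⟨hts, hinj, himg⟩
        obtain ⟨x, hxt, hgx⟩ := mem_image.1 (himg ▸ mem_insert_self p u)
        refine ⟨x, t.erase x, ⟨⟨hts hxt, hgx⟩, (erase_subset x t).trans hts,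
          hinj.mono (erase_subset x t), ?_⟩, insert_erase hxt⟩
        ext y
        simp only [mem_image, mem_erase]
        constructor
        · rintro ⟨z, ⟨hzx, hzt⟩, rfl⟩
          have hgz : g z ∈ insert p u := himg ▸ mem_image_of_mem g hzt
          exact (mem_insert.1 hgz).resolve_left fun h => hzx (hinj hzt hxt (h.trans hgx.symm))
        · intro hy
          obtain ⟨z, hzt, rfl⟩ := mem_image.1 (himg ▸ mem_insert_of_mem hy)
          refine ⟨z, ⟨?_, hzt⟩, rfl⟩
          rintro rfl
          exact hpu (hgx ▸ hy)
      · rintro ⟨x, t', ⟨⟨hxs, rfl⟩, ht's, hinj, rfl⟩, rfl⟩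
        have hxt' : x ∉ t' := fun hx => hpu (mem_image_of_mem g hx)
        refine ⟨insert_subset hxs ht's, ?_, image_insert g x t'⟩
        rw [coe_insert, Set.injOn_insert (mem_coe.not.2 hxt')]
        exact ⟨hinj, by simpa using hpu⟩
    rw [hset, card_image_of_injOn, card_product, ih, prod_insert hpu]
    rintro ⟨x, t⟩ hxt ⟨y, t'⟩ hyt' h
    simp only [coe_product, coe_filter, mem_powerset, Set.mem_prod, Set.mem_ofPred_eq] at hxt hyt' h
    obtain ⟨⟨hxs, hgx⟩, -, -, ht⟩ := hxt
    obtain ⟨⟨hys, hgy⟩, -, -, ht'⟩ := hyt'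
    have hnot {z : α} {r : Finset α} (hz : g z = p) (hr : r.image g = u) : z ∉ r :=
      fun hzr => hpu (hz ▸ hr ▸ mem_image_of_mem g hzr)
    have hxy : x = y :=
      (mem_insert.1 (h ▸ mem_insert_self x t)).resolve_right (hnot hgx ht')
    subst hxy
    rw [← erase_insert (hnot hgx ht), h, erase_insert (hnot hgy ht')]

theorem sum_powerset_injOn_neg_one_pow_mul_prod_factorial {s : Finset α} (hs : s.Nonempty)
    {T : Finset β} (hT : ∀ x ∈ s, g x ∈ T) :
    ∑ t ∈ s.powerset.filter (fun t : Finset α => Set.InjOn g ↑t),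
      (-1 : ℤ) ^ #t * ∏ p ∈ T, ((#((s \ t).filter (g · = p)))! : ℤ) = 0 := by
  set n : β → ℕ := fun p => #(s.filter (g · = p))
  set F : Finset β → ℤ := fun u => (-1) ^ #u * ∏ p ∈ T, ((n p - if p ∈ u then 1 else 0)! : ℤ)
  have hterm : ∀ t ∈ s.powerset.filter (fun t : Finset α => Set.InjOn g ↑t),
      (-1 : ℤ) ^ #t * ∏ p ∈ T, ((#((s \ t).filter (g · = p)))! : ℤ) = F (t.image g) := by
    intro t ht
    obtain ⟨hts, hinj⟩ := mem_filter.1 ht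
    dsimp only [F]
    rw [card_image_of_injOn hinj]
    congr 1
    refine prod_congr rfl fun p _ => ?_
    have hsplit : #((s \ t).filter (g · = p)) + #(t.filter (g · = p)) = n p := by
      rw [← card_union_of_disjoint (disjoint_filter_filter sdiff_disjoint), ← filter_union,
        sdiff_union_of_subset (mem_powerset.1 hts)]
    rw [← card_filter_eq_ite_of_injOn g hinj p, ← hsplit, Nat.add_sub_cancel]
  have hfibre : ∀ u ∈ (s.image g).powerset,
      ∑ t ∈ (s.powerset.filter fun t : Finset α => Set.InjOn g ↑t).filter (·.image g = u),
        F (t.image g) = (-1) ^ #u * ∏ p ∈ T, ((n p)! : ℤ) := by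
    intro u hu
    have hu : u ⊆ s.image g := mem_powerset.1 hu
    rw [sum_congr rfl fun t ht => congrArg F (mem_filter.1 ht).2, sum_const, filter_filter,
      card_powerset_filter_injOn_image_eq, nsmul_eq_mul]
    have hpos : ∀ p ∈ u, n p ≠ 0 := fun p hp => by
      obtain ⟨x, hx, rfl⟩ := mem_image.1 (hu hp)
      exact (card_pos.2 ⟨x, mem_filter.2 ⟨hx, rfl⟩⟩ : 0 < #(s.filter (g · = g x))).ne'
    rw [mul_left_comm]
    congr 1
    exact_mod_cast prod_mul_prod_factorial_sub_ite n (hu.trans (image_subset_iff.2 hT)) hpos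
  rw [sum_congr rfl hterm,
    ← sum_fiberwise_of_maps_to (g := (·.image g)) (t := (s.image g).powerset),
    sum_congr rfl hfibre, ← sum_mul, sum_powerset_neg_one_pow_card_of_nonempty (hs.image g),
    zero_mul]
  intro t ht
  exact mem_powerset.2 (image_subset_image (mem_powerset.1 (mem_filter.1 ht).1))

end Transversals

section Counting

variable {α β : Type*} [DecidableEq α] [Fintype α] [DecidableEq β]

theorem sum_neg_one_pow_mul_card_orderedPartitionsInjOn (g : α → β) {T : Finset β} (n : ℕ) :
    ∀ {s : Finset α}, (∀ x ∈ s, g x ∈ T) → #s ≤ n →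
      ∑ k ∈ range (n + 1), (-1 : ℤ) ^ k * #(orderedPartitionsInjOn g s k) =
        (-1) ^ #s * ∏ p ∈ T, ((#(s.filter (g · = p)))! : ℤ) := by
  induction n with
  | zero =>
    intro s _ hs
    rw [card_eq_zero.1 (Nat.le_zero.1 hs)]
    simp [card_orderedPartitionsInjOn_zero]
  | succ n ih =>
    intro s hT hs
    have hrec : ∑ k ∈ range (n + 1), (-1 : ℤ) ^ (k + 1) * #(orderedPartitionsInjOn g s (k + 1)) =
        -∑ t ∈ s.powerset.filter (fun t : Finset α => Set.InjOn g ↑t ∧ t.Nonempty),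
          (-1) ^ #(s \ t) * ∏ p ∈ T, ((#((s \ t).filter (g · = p)))! : ℤ) := by
      simp_rw [card_orderedPartitionsInjOn_succ, Nat.cast_sum, mul_sum]
      rw [sum_comm, ← sum_neg_distrib]
      refine sum_congr rfl fun t ht => ?_
      obtain ⟨hts, -, htne⟩ := mem_filter.1 ht
      rw [← ih (fun x hx => hT x (mem_sdiff.1 hx).1), ← sum_neg_distrib]
      · exact sum_congr rfl fun k _ => by ring
      · rw [card_sdiff_of_subset (mem_powerset.1 hts)]
        have := htne.card_pos
        omega
    rw [sum_range_succ', hrec, card_orderedPartitionsInjOn_zero]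
    rcases s.eq_empty_or_nonempty with rfl | hne
    · simp
    · rw [if_neg hne.ne_empty, Nat.cast_zero, mul_zero, add_zero]
      have key := sum_powerset_injOn_neg_one_pow_mul_prod_factorial g hne hT
      rw [← sum_filter_add_sum_filter_not _ (fun t : Finset α => t.Nonempty), filter_filter,
        filter_filter] at key
      have hempty :
          s.powerset.filter (fun t : Finset α => Set.InjOn g ↑t ∧ ¬t.Nonempty) = {∅} := by
        ext t
        simp only [mem_filter, mem_powerset, not_nonempty_iff_eq_empty, mem_singleton]
        exact ⟨fun h => h.2.2, by rintro rfl; simp⟩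
      rw [hempty, sum_singleton, sdiff_empty, card_empty, pow_zero, one_mul] at key
      have hsign : ∀ t ∈ s.powerset.filter (fun t : Finset α => Set.InjOn g ↑t ∧ t.Nonempty),
          (-1 : ℤ) ^ #(s \ t) = (-1) ^ #s * (-1) ^ #t := fun t ht => by
        rw [← card_sdiff_add_card_eq_card (mem_powerset.1 (mem_filter.1 ht).1), pow_add,
          mul_assoc, ← pow_add, Even.neg_one_pow ⟨_, rfl⟩, mul_one]
      rw [sum_congr rfl fun t ht => by rw [hsign t ht, mul_assoc], ← mul_sum]
      linear_combination (-(-1 : ℤ) ^ #s) * key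

end Counting

section SetPartition

variable {I : Type*} [DecidableEq I]

namespace IsSetPartition

variable [Fintype I] {ρ : Finset (Finset I)}

theorem pairwiseDisjoint (hρ : IsSetPartition ρ) : (ρ : Set (Finset I)).PairwiseDisjoint id :=
  hρ.2.1

theorem exists_mem (hρ : IsSetPartition ρ) (x : I) : ∃ b ∈ ρ, x ∈ b := by
  simpa [← hρ.2.2] using mem_univ x

theorem eq_of_subset (hρ : IsSetPartition ρ) {b c : Finset I} (hb : b ∈ ρ) (hc : c ∈ ρ)
    (hbc : b ⊆ c) : b = c :=
  have ⟨x, hx⟩ := hρ.1 b hb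
  hρ.pairwiseDisjoint.elim_finset hb hc x hx (hbc hx)

theorem card_le (hρ : IsSetPartition ρ) : #ρ ≤ Fintype.card I := by
  simpa [hρ.2.2] using card_le_card_biUnion hρ.pairwiseDisjoint hρ.1

end IsSetPartition

-- `τ(C)` in the notation of the statement.
def refineAlong (π : Finset (Finset I)) {k : ℕ} (C : Fin k → Finset I) : Finset (Finset I) :=
  univ.biUnion fun i => (π.image (· ∩ C i)).filter (·.Nonempty)

theorem mem_refineAlong {π : Finset (Finset I)} {k : ℕ} {C : Fin k → Finset I} {b : Finset I} :
    b ∈ refineAlong π C ↔ b.Nonempty ∧ ∃ i, ∃ p ∈ π, p ∩ C i = b := by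
  simp only [refineAlong, mem_biUnion, mem_univ, true_and, mem_filter, mem_image]
  exact ⟨fun ⟨i, h, hb⟩ => ⟨hb, i, h⟩, fun ⟨hb, i, h⟩ => ⟨i, h, hb⟩⟩

noncomputable def blockOf (π : Finset (Finset I)) (b : Finset I) : Finset I :=
  if h : ∃ p ∈ π, b ⊆ p then h.choose else ∅

theorem blockOf_mem_and_subset {π : Finset (Finset I)} {b : Finset I} (h : ∃ p ∈ π, b ⊆ p) :
    blockOf π b ∈ π ∧ b ⊆ blockOf π b := by
  rw [blockOf, dif_pos h]
  exact h.choose_spec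

theorem blockOf_eq {π : Finset (Finset I)} (hπ : (π : Set (Finset I)).PairwiseDisjoint id)
    {b p : Finset I} (hb : b.Nonempty) (hp : p ∈ π) (hbp : b ⊆ p) : blockOf π b = p :=
  have ⟨x, hx⟩ := hb
  have ⟨hq, hbq⟩ := blockOf_mem_and_subset ⟨p, hp, hbp⟩
  hπ.elim_finset hq hp x (hbq hx) (hbp hx)

theorem refineAlong_refines (π : Finset (Finset I)) {k : ℕ} (C : Fin k → Finset I) :
    ∀ b ∈ refineAlong π C, ∃ p ∈ π, b ⊆ p := by
  intro b hb
  obtain ⟨-, i, p, hp, rfl⟩ := mem_refineAlong.1 hb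
  exact ⟨p, hp, inter_subset_left⟩

theorem inter_biUnion_eq_of_injOn {π : Finset (Finset I)}
    (hπ : (π : Set (Finset I)).PairwiseDisjoint id) {d : Finset (Finset I)}
    (hd : ∀ b ∈ d, ∃ p ∈ π, b ⊆ p) (hinj : Set.InjOn (blockOf π) ↑d)
    {p b : Finset I} (hp : p ∈ π) (hb : b ∈ d) (hpb : (p ∩ b).Nonempty) :
    p ∩ d.biUnion id = b := by
  have hblock : ∀ c ∈ d, (p ∩ c).Nonempty → blockOf π c = p := fun c hc ⟨x, hx⟩ =>
    have ⟨hq, hcq⟩ := blockOf_mem_and_subset (hd c hc)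
    hπ.elim_finset hq hp x (hcq (mem_inter.1 hx).2) (mem_inter.1 hx).1
  ext y
  simp only [mem_inter, mem_biUnion, id]
  constructor
  · rintro ⟨hyp, c, hc, hyc⟩
    have hcp := hblock c hc ⟨y, mem_inter.2 ⟨hyp, hyc⟩⟩
    rwa [← hinj hc hb (hcp.trans (hblock b hb hpb).symm)]
  · intro hyb
    refine ⟨?_, b, hb, hyb⟩
    rw [← hblock b hb hpb]
    exact (blockOf_mem_and_subset (hd b hb)).2 hyb

end SetPartition

section Refinement

variable {I : Type*} [Fintype I] [DecidableEq I] {π ρ : Finset (Finset I)} {k : ℕ}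

theorem isSetPartition_refineAlong (hπ : IsSetPartition π) {C : Fin k → Finset I}
    (hC : IsOrderedPartition univ C) : IsSetPartition (refineAlong π C) := by
  refine ⟨fun b hb => (mem_refineAlong.1 hb).1, ?_, ?_⟩
  · intro b hb c hc hbc
    obtain ⟨-, i, p, hp, rfl⟩ := mem_refineAlong.1 hb
    obtain ⟨-, j, q, hq, rfl⟩ := mem_refineAlong.1 hc
    refine disjoint_left.2 fun x hx hx' => hbc ?_
    rw [mem_inter] at hx hx'
    rw [hπ.pairwiseDisjoint.elim_finset hp hq x hx.1 hx'.1, hC.eq_of_mem hx.2 hx'.2]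
  · refine eq_univ_of_forall fun x => ?_
    obtain ⟨p, hp, hxp⟩ := hπ.exists_mem x
    obtain ⟨i, hxi⟩ := hC.exists_mem (mem_univ x)
    have hx : x ∈ p ∩ C i := mem_inter.2 ⟨hxp, hxi⟩
    exact mem_biUnion.2 ⟨p ∩ C i, mem_refineAlong.2 ⟨⟨x, hx⟩, i, p, hp, rfl⟩, hx⟩

theorem exists_mem_subset_of_refineAlong_eq {C : Fin k → Finset I}
    (hC : IsOrderedPartition univ C) (hρ : IsSetPartition ρ) (hτ : refineAlong π C = ρ)
    {x : I} {i : Fin k} (hx : x ∈ C i) : ∃ b ∈ ρ, x ∈ b ∧ b ⊆ C i := by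
  obtain ⟨b, hb, hxb⟩ := hρ.exists_mem x
  obtain ⟨-, j, p, -, rfl⟩ := mem_refineAlong.1 (hτ ▸ hb)
  obtain rfl := hC.eq_of_mem (mem_inter.1 hxb).2 hx
  exact ⟨_, hb, hxb, inter_subset_right⟩

theorem filter_subset_mem_orderedPartitionsInjOn {C : Fin k → Finset I}
    (hC : IsOrderedPartition univ C) (hρ : IsSetPartition ρ) (hτ : refineAlong π C = ρ) :
    (fun i => ρ.filter (· ⊆ C i)) ∈ orderedPartitionsInjOn (blockOf π) ρ k := by
  refine mem_orderedPartitionsInjOn.2 ⟨⟨fun i => ?_, fun i j hij => ?_, ?_⟩, fun i => ?_⟩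
  · obtain ⟨x, hx⟩ := hC.1 i
    obtain ⟨b, hb, -, hbC⟩ := exists_mem_subset_of_refineAlong_eq hC hρ hτ hx
    exact ⟨b, mem_filter.2 ⟨hb, hbC⟩⟩
  · refine disjoint_left.2 fun b hbi hbj => hij ?_
    obtain ⟨x, hx⟩ := hρ.1 b (mem_filter.1 hbi).1
    exact hC.eq_of_mem ((mem_filter.1 hbi).2 hx) ((mem_filter.1 hbj).2 hx)
  · ext b
    simp only [mem_biUnion, mem_univ, true_and, mem_filter]
    refine ⟨fun ⟨_, hb, _⟩ => hb, fun hb => ?_⟩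
    obtain ⟨-, i, p, -, rfl⟩ := mem_refineAlong.1 (hτ ▸ hb)
    exact ⟨i, hb, inter_subset_right⟩
  · intro b hb c hc hbc
    rw [coe_filter, Set.mem_ofPred_eq] at hb hc
    have hspec {a : Finset I} (ha : a ∈ ρ) :=
      blockOf_mem_and_subset (refineAlong_refines π C a (hτ ▸ ha))
    obtain ⟨x, hx⟩ := hρ.1 b hb.1
    have hmem : blockOf π b ∩ C i ∈ ρ := hτ ▸ mem_refineAlong.2
      ⟨⟨x, mem_inter.2 ⟨(hspec hb.1).2 hx, hb.2 hx⟩⟩, i, _, (hspec hb.1).1, rfl⟩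
    rw [hρ.eq_of_subset hb.1 hmem (subset_inter (hspec hb.1).2 hb.2),
      hρ.eq_of_subset hc.1 hmem (subset_inter (hbc ▸ (hspec hc.1).2) hc.2)]

theorem isOrderedPartition_biUnion_and_refineAlong_eq
    (hπ : (π : Set (Finset I)).PairwiseDisjoint id) (hρ : IsSetPartition ρ)
    (href : ∀ b ∈ ρ, ∃ p ∈ π, b ⊆ p) {D : Fin k → Finset (Finset I)}
    (hD : D ∈ orderedPartitionsInjOn (blockOf π) ρ k) :
    IsOrderedPartition univ (fun i => (D i).biUnion id) ∧
      refineAlong π (fun i => (D i).biUnion id) = ρ := by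
  obtain ⟨hD, hinj⟩ := mem_orderedPartitionsInjOn.1 hD
  have hinter {i : Fin k} {p b : Finset I} (hp : p ∈ π) (hb : b ∈ D i) (hpb : (p ∩ b).Nonempty) :=
    inter_biUnion_eq_of_injOn hπ (fun c hc => href c (hD.subset i hc)) (hinj i) hp hb hpb
  refine ⟨⟨fun i => ?_, fun i j hij => ?_, ?_⟩, ?_⟩
  · obtain ⟨b, hb⟩ := hD.1 i
    exact (hρ.1 b (hD.subset i hb)).mono (subset_biUnion_of_mem id hb)
  · refine disjoint_left.2 fun x hxi hxj => hij ?_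
    obtain ⟨b, hb, hxb⟩ := mem_biUnion.1 hxi
    obtain ⟨c, hc, hxc⟩ := mem_biUnion.1 hxj
    obtain rfl := hρ.pairwiseDisjoint.elim_finset (hD.subset i hb) (hD.subset j hc) x hxb hxc
    exact hD.eq_of_mem hb hc
  · rw [← biUnion_biUnion, hD.2.2, hρ.2.2]
  · ext b
    rw [mem_refineAlong]
    constructor
    · rintro ⟨⟨x, hx⟩, i, p, hp, rfl⟩
      obtain ⟨hxp, hxD⟩ := mem_inter.1 hx
      obtain ⟨c, hc, hxc⟩ := mem_biUnion.1 hxD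
      rw [hinter hp hc ⟨x, mem_inter.2 ⟨hxp, hxc⟩⟩]
      exact hD.subset i hc
    · intro hb
      obtain ⟨i, hbi⟩ := hD.exists_mem hb
      obtain ⟨hp, hbp⟩ := blockOf_mem_and_subset (href b hb)
      have hne : (blockOf π b ∩ b).Nonempty := by rw [inter_eq_right.2 hbp]; exact hρ.1 b hb
      exact ⟨hρ.1 b hb, i, _, hp, hinter hp hbi hne⟩

theorem card_filter_refineAlong_eq_card_orderedPartitionsInjOn
    (hπ : (π : Set (Finset I)).PairwiseDisjoint id) (hρ : IsSetPartition ρ)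
    (href : ∀ b ∈ ρ, ∃ p ∈ π, b ⊆ p) (k : ℕ) :
    #((univ : Finset (Fin k → Finset I)).filter
        fun C => IsOrderedPartition univ C ∧ refineAlong π C = ρ) =
      #(orderedPartitionsInjOn (blockOf π) ρ k) := by
  refine card_nbij' (fun C i => ρ.filter (· ⊆ C i)) (fun D i => (D i).biUnion id) ?_ ?_ ?_ ?_
  · intro C hC
    rw [coe_filter, Set.mem_ofPred_eq] at hC
    exact filter_subset_mem_orderedPartitionsInjOn hC.2.1 hρ hC.2.2
  · intro D hD
    rw [coe_filter, Set.mem_ofPred_eq]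
    exact ⟨mem_univ _, isOrderedPartition_biUnion_and_refineAlong_eq hπ hρ href hD⟩
  · intro C hC
    rw [coe_filter, Set.mem_ofPred_eq] at hC
    funext i
    ext x
    simp only [mem_biUnion, mem_filter, id]
    constructor
    · rintro ⟨b, ⟨-, hbC⟩, hxb⟩
      exact hbC hxb
    · intro hx
      obtain ⟨b, hb, hxb, hbC⟩ := exists_mem_subset_of_refineAlong_eq hC.2.1 hρ hC.2.2 hx
      exact ⟨b, ⟨hb, hbC⟩, hxb⟩
  · intro D hD
    obtain ⟨hD, -⟩ := mem_orderedPartitionsInjOn.1 hD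
    funext i
    ext b
    rw [mem_filter]
    constructor
    · rintro ⟨hb, hbD⟩
      obtain ⟨x, hx⟩ := hρ.1 b hb
      obtain ⟨c, hc, hxc⟩ := mem_biUnion.1 (hbD hx)
      rwa [hρ.pairwiseDisjoint.elim_finset hb (hD.subset i hc) x hx hxc]
    · intro hb
      exact ⟨hD.subset i hb, subset_biUnion_of_mem id hb⟩

end Refinement

theorem stmt19_general {I : Type*} [Fintype I] [DecidableEq I]
    (π : Finset (Finset I)) (hπ : IsSetPartition π) :
    (∑ k ∈ Finset.range (Fintype.card I + 1),
        ∑ C ∈ (Finset.univ : Finset (Fin k → Finset I)).filter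
            (fun C => (∀ i, (C i).Nonempty) ∧
              (∀ i j, i ≠ j → Disjoint (C i) (C j)) ∧
              Finset.univ.biUnion C = Finset.univ),
          Finsupp.single
            ((Finset.univ : Finset (Fin k)).biUnion
              (fun i => (π.image (· ∩ C i)).filter (·.Nonempty)))
            ((-1 : ℤ) ^ k)) =
      ∑ ρ ∈ (Finset.univ : Finset (Finset (Finset I))).filter
          (fun ρ => ((∀ p ∈ ρ, p.Nonempty) ∧ (∀ p ∈ ρ, ∀ q ∈ ρ, p ≠ q → Disjoint p q) ∧
              ρ.biUnion id = Finset.univ) ∧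
            ∀ b ∈ ρ, ∃ p ∈ π, b ⊆ p),
        Finsupp.single ρ
          ((-1 : ℤ) ^ ρ.card *
            ∏ p ∈ π, (((ρ.filter fun b => b ⊆ p).card).factorial : ℤ)) := by
  change ∑ k ∈ range (Fintype.card I + 1), ∑ C ∈ univ.filter (IsOrderedPartition univ),
      Finsupp.single (refineAlong π C) ((-1 : ℤ) ^ k) = _
  ext ρ
  simp only [Finsupp.finsetSum_apply, Finsupp.single_apply, sum_ite_eq', mem_filter, mem_univ,
    true_and, ← sum_filter, sum_const, filter_filter, nsmul_eq_mul]
  split_ifs with hρ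
  · obtain ⟨hρ, href⟩ : IsSetPartition ρ ∧ _ := hρ
    simp_rw [card_filter_refineAlong_eq_card_orderedPartitionsInjOn hπ.pairwiseDisjoint hρ href,
      mul_comm _ ((-1 : ℤ) ^ _)]
    rw [sum_neg_one_pow_mul_card_orderedPartitionsInjOn (blockOf π) _
      (fun b hb => (blockOf_mem_and_subset (href b hb)).1) hρ.card_le]
    congr 1
    refine prod_congr rfl fun p hp => ?_
    congr 3
    refine filter_congr fun b hb => ⟨?_, blockOf_eq hπ.pairwiseDisjoint (hρ.1 b hb) hp⟩
    rintro rfl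
    exact (blockOf_mem_and_subset (href b hb)).2
  · refine sum_eq_zero fun k _ => ?_
    rw [card_eq_zero.2, Nat.cast_zero, zero_mul]
    refine filter_eq_empty_iff.2 fun C _ ⟨hC, hτ⟩ => hρ ?_
    exact hτ ▸ ⟨isSetPartition_refineAlong hπ hC, refineAlong_refines π C⟩

/-- The antipode formula for set partitions: in the free `ℤ`-module on set partitions of a
nonempty finite set `I`, the signed sum over all ordered set partitions `(S_1, …, S_k)` of
`I` of the set partition `τ(S_1,…,S_k)` (with blocks the blocks of `π|_{S_1}, …, π|_{S_k}`)
equals `∑_{ρ ≤ π} (−1)^{b(ρ)} (∏_{p ∈ π} n_p(ρ)!) · [ρ]`, summing over refinements `ρ` of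
`π`. -/
theorem stmt19 {I : Type*} [Fintype I] [DecidableEq I] [Nonempty I]
    (π : Finset (Finset I)) (hπ : IsSetPartition π) :
    (∑ k ∈ Finset.range (Fintype.card I + 1),
        ∑ C ∈ (Finset.univ : Finset (Fin k → Finset I)).filter
            (fun C => (∀ i, (C i).Nonempty) ∧
              (∀ i j, i ≠ j → Disjoint (C i) (C j)) ∧
              Finset.univ.biUnion C = Finset.univ),
          Finsupp.single
            ((Finset.univ : Finset (Fin k)).biUnion
              (fun i => (π.image (· ∩ C i)).filter (·.Nonempty)))
            ((-1 : ℤ) ^ k)) =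
      ∑ ρ ∈ (Finset.univ : Finset (Finset (Finset I))).filter
          (fun ρ => ((∀ p ∈ ρ, p.Nonempty) ∧ (∀ p ∈ ρ, ∀ q ∈ ρ, p ≠ q → Disjoint p q) ∧
              ρ.biUnion id = Finset.univ) ∧
            ∀ b ∈ ρ, ∃ p ∈ π, b ⊆ p),
        Finsupp.single ρ
          ((-1 : ℤ) ^ ρ.card *
            ∏ p ∈ π, (((ρ.filter fun b => b ⊆ p).card).factorial : ℤ)) :=
  stmt19_general π hπ
end
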